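/- arXiv:0707.1292 — 6 statements merged into one kernel-verified Lean document; each statement's English description precedes it below -/
import Mathlib

section
/- Let Λ be a rank-r graph, let V = (V_λ)_{λ∈Λ} be a Λ-contraction on a complex Hilbert space H, and let s ∈ (0,1). Then for every ξ ∈ H the family (s^{2|λ|} V_λ Δ_s(V) V_λ* ξ)_{λ∈Λ} is summable in H with sum ξ; that is, Σ_{λ∈Λ} s^{2|λ|} V_λ Δ_s(V) V_λ* = I in the strong operator topology. -/
open scoped ComplexOrder
open ContinuousLinearMap

noncomputable section

universe u

/-- A rank-`r` graph: a countable small category whose morphisms form `Λ`, objects being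
identified with degree-zero morphisms, equipped with a degree functor into `ℕ^r`
satisfying the unique factorisation property. -/
structure KGraph (r : ℕ) where
  Λ : Type
  countable : Countable Λ
  src : Λ → Λ
  tgt : Λ → Λ
  deg : Λ → Fin r → ℕ
  comp : Λ → Λ → Λ
  deg_src : ∀ l, deg (src l) = 0
  deg_tgt : ∀ l, deg (tgt l) = 0
  src_eq_self : ∀ l, deg l = 0 → src l = l
  tgt_eq_self : ∀ l, deg l = 0 → tgt l = l
  comp_src_self : ∀ l, comp l (src l) = l
  tgt_comp_self : ∀ l, comp (tgt l) l = l
  src_comp : ∀ l m, src l = tgt m → src (comp l m) = src m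
  tgt_comp : ∀ l m, src l = tgt m → tgt (comp l m) = tgt l
  deg_comp : ∀ l m, src l = tgt m → deg (comp l m) = deg l + deg m
  comp_assoc : ∀ l m n, src l = tgt m → src m = tgt n →
    comp (comp l m) n = comp l (comp m n)
  factorisation : ∀ (l : Λ) (m n : Fin r → ℕ), deg l = m + n →
    ∃! p : Λ × Λ, deg p.1 = m ∧ deg p.2 = n ∧ src p.1 = tgt p.2 ∧ comp p.1 p.2 = l

namespace KGraph

variable {r : ℕ} (K : KGraph r)

/-- `|λ|`, the total degree of a morphism. -/
def degSum (l : K.Λ) : ℕ := ∑ j, K.deg l j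

/-- The vertices `Λ⁰`, i.e. the degree-zero morphisms. -/
def IsVertex (l : K.Λ) : Prop := K.deg l = 0

/-- The pairs `(α, β)` describing the elements `μα = νβ` of `MCE(μ, ν)`. -/
def MCEPair (μ ν : K.Λ) (p : K.Λ × K.Λ) : Prop :=
  K.src μ = K.tgt p.1 ∧ K.src ν = K.tgt p.2 ∧ K.comp μ p.1 = K.comp ν p.2 ∧
    K.deg (K.comp μ p.1) = K.deg μ ⊔ K.deg ν

/-- `Λ` is finitely aligned. -/
def FinitelyAligned : Prop := ∀ μ ν : K.Λ, {p : K.Λ × K.Λ | K.MCEPair μ ν p}.Finite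

/-- `Λ` is row-finite. -/
def RowFinite : Prop :=
  ∀ (n : Fin r → ℕ) (a : K.Λ), {l : K.Λ | K.deg l = n ∧ K.tgt l = a}.Finite

/-- `Λ` is a finite graph: each `Λ^n` is finite. -/
def FiniteGraph : Prop := ∀ n : Fin r → ℕ, {l : K.Λ | K.deg l = n}.Finite

/-- `Λ` has no sources. -/
def NoSources : Prop :=
  ∀ a : K.Λ, K.IsVertex a → ∀ n : Fin r → ℕ, ∃ l, K.deg l = n ∧ K.tgt l = a

/-- `Λ` is cofinal. -/
def Cofinal : Prop := ∀ a : K.Λ, K.IsVertex a → ∃ l, K.deg l ≠ 0 ∧ K.tgt l = a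

end KGraph

section Families

variable {r : ℕ} (K : KGraph r)
variable {H : Type u} [NormedAddCommGroup H] [InnerProductSpace ℂ H] [CompleteSpace H]

/-- A `Λ`-contraction on a Hilbert space `H`. -/
def IsLambdaContraction (V : K.Λ → H →L[ℂ] H) : Prop :=
  (∀ l m, K.src l ≠ K.tgt m → V l ∘L V m = 0) ∧
  (∀ l m, K.src l = K.tgt m → V l ∘L V m = V (K.comp l m)) ∧
  (∀ (n : Fin r → ℕ) (F : Finset K.Λ), (∀ l ∈ F, K.deg l = n) →
    ((1 : H →L[ℂ] H) - ∑ l ∈ F, V l ∘L adjoint (V l)).IsPositive) ∧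
  (∀ a, K.IsVertex a → IsSelfAdjoint (V a) ∧ V a ∘L V a = V a) ∧
  (∀ ξ : H, HasSum (fun a : {a : K.Λ // K.IsVertex a} => V a.1 ξ) ξ)

/-- A `Λ`-isometry on a Hilbert space `H`. -/
def IsLambdaIsometry (V : K.Λ → H →L[ℂ] H) : Prop :=
  IsLambdaContraction K V ∧
  ∀ (n : Fin r → ℕ) (ξ : H),
    HasSum (fun l : {l : K.Λ // K.deg l = n} => V l.1 (adjoint (V l.1) ξ)) ξ

/-- `D` is the defect operator `Δ_s(V)` (a strong-operator-topology sum). -/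
def IsDefectOperator (V : K.Λ → H →L[ℂ] H) (s : ℝ) (D : H →L[ℂ] H) : Prop :=
  ∀ ξ : H, HasSum
    (fun m : {m : K.Λ // K.deg m ≤ 1} =>
      (((-(s ^ 2)) ^ K.degSum m.1 : ℝ) : ℂ) • V m.1 (adjoint (V m.1) ξ)) (D ξ)

/-- The Popescu condition for a `Λ`-contraction. -/
def PopescuCondition (V : K.Λ → H →L[ℂ] H) : Prop :=
  ∃ ρ ∈ Set.Ioo (0 : ℝ) 1, ∀ s ∈ Set.Ioo ρ 1,
    ∃ D : H →L[ℂ] H, IsDefectOperator K V s D ∧ D.IsPositive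

/-- A Toeplitz-Cuntz-Krieger `Λ`-family. -/
def IsTCKFamily (W : K.Λ → H →L[ℂ] H) : Prop :=
  (∀ l, W l ∘L adjoint (W l) ∘L W l = W l) ∧
  (∀ a, K.IsVertex a → IsSelfAdjoint (W a) ∧ W a ∘L W a = W a) ∧
  (∀ a b, K.IsVertex a → K.IsVertex b → a ≠ b → W a ∘L W b = 0) ∧
  (∀ l m, K.src l = K.tgt m → W l ∘L W m = W (K.comp l m)) ∧
  (∀ l, adjoint (W l) ∘L W l = W (K.src l)) ∧
  (∀ n : Fin r → ℕ, n ≠ 0 → ∀ a, K.IsVertex a → ∀ F : Finset K.Λ,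
    (∀ l ∈ F, K.deg l = n ∧ K.tgt l = a) →
    (W a - ∑ l ∈ F, W l ∘L adjoint (W l)).IsPositive) ∧
  (∀ μ ν : K.Λ, ∀ ξ : H,
    HasSum (fun p : {p : K.Λ × K.Λ // K.MCEPair μ ν p} => W p.1.1 (adjoint (W p.1.2) ξ))
      (adjoint (W μ) (W ν ξ)))

/-- A Cuntz-Pimsner `Λ`-family. -/
def IsCPFamily (W : K.Λ → H →L[ℂ] H) : Prop :=
  IsTCKFamily K W ∧
  ∀ n : Fin r → ℕ, n ≠ 0 → ∀ a, K.IsVertex a → ∀ ξ : H,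
    HasSum (fun l : {l : K.Λ // K.deg l = n ∧ K.tgt l = a} => W l.1 (adjoint (W l.1) ξ))
      (W a ξ)

end Families

section Creation

variable {r : ℕ}

/-- The Fock space `ℓ²(Λ)` of a higher-rank graph. -/
abbrev FockSpace (K : KGraph r) : Type := lp (fun _ : K.Λ => ℂ) 2

/-- `L` is the family of creation operators on `ℓ²(Λ)`:
`L_λ δ_μ = δ_{λμ}` if `s(λ) = r(μ)` and `L_λ δ_μ = 0` otherwise. -/
def IsCreationFamily (K : KGraph r) [DecidableEq K.Λ]
    (L : K.Λ → FockSpace K →L[ℂ] FockSpace K) : Prop :=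
  ∀ l m : K.Λ,
    (K.src l = K.tgt m → L l (lp.single 2 m 1) = lp.single 2 (K.comp l m) 1) ∧
    (K.src l ≠ K.tgt m → L l (lp.single 2 m 1) = 0)

end Creation

section OpAux
open scoped InnerProductSpace
open ContinuousLinearMap
open scoped InnerProductSpace
lemma opEst {ι : Type*} {H : Type*} [NormedAddCommGroup H] [InnerProductSpace ℂ H] [CompleteSpace H]
    (F : Finset ι) (A : ι → H →L[ℂ] H)
    (hpos : ((1 : H →L[ℂ] H) - ∑ i ∈ F, A i ∘L adjoint (A i)).IsPositive) (ξ : H) :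
    ‖∑ i ∈ F, A i (adjoint (A i) ξ)‖ ^ 2 ≤ ∑ i ∈ F, ‖adjoint (A i) ξ‖ ^ 2 ∧
      ∑ i ∈ F, ‖adjoint (A i) ξ‖ ^ 2 ≤ ‖ξ‖ ^ 2 := by
  set T : H →L[ℂ] H := ∑ i ∈ F, A i ∘L adjoint (A i) with hT
  have hTapp : ∀ x, T x = ∑ i ∈ F, A i (adjoint (A i) x) := by
    intro x; simp [hT, ContinuousLinearMap.sum_apply]
  have hre : ∀ x : H, (RCLike.re (⟪T x, x⟫_ℂ) : ℝ) = ∑ i ∈ F, ‖adjoint (A i) x‖ ^ 2 := by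
    intro x
    rw [hTapp, sum_inner, map_sum]
    refine Finset.sum_congr rfl fun i _ => ?_
    have h1 : ⟪A i (adjoint (A i) x), x⟫_ℂ = ⟪adjoint (A i) x, adjoint (A i) x⟫_ℂ :=
      (adjoint_inner_right (A i) (adjoint (A i) x) x).symm
    rw [h1, inner_self_eq_norm_sq]
  have hpos' : ∀ x : H, 0 ≤ RCLike.re (⟪T x, x⟫_ℂ) := by
    intro x; rw [hre]; positivity
  have hle : ∀ x : H, RCLike.re (⟪T x, x⟫_ℂ) ≤ ‖x‖ ^ 2 := by
    intro x
    have h2 := hpos.2 x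
    rw [ContinuousLinearMap.reApplyInnerSelf_apply] at h2
    have h3 : ((1 : H →L[ℂ] H) - T) x = x - T x := by simp
    rw [h3, inner_sub_left, map_sub, inner_self_eq_norm_sq] at h2
    linarith
  have hsa : IsSelfAdjoint T := by
    rw [isSelfAdjoint_iff']
    rw [hT, map_sum]
    refine Finset.sum_congr rfl fun i _ => ?_
    rw [adjoint_comp, adjoint_adjoint]
  have hsym : ∀ x y : H, RCLike.re (⟪T x, y⟫_ℂ) = RCLike.re (⟪T y, x⟫_ℂ) := by
    intro x y
    have h1 : ⟪T x, y⟫_ℂ = ⟪x, T y⟫_ℂ := by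
      conv_lhs => rw [← isSelfAdjoint_iff'.mp hsa]
      rw [adjoint_inner_left]
    rw [h1]
    exact inner_re_symm _ _
  have hCS : ∀ x y : H, (RCLike.re (⟪T x, y⟫_ℂ)) ^ 2 ≤
      RCLike.re (⟪T x, x⟫_ℂ) * RCLike.re (⟪T y, y⟫_ℂ) := by
    intro x y
    have hq : ∀ t : ℝ, 0 ≤ RCLike.re (⟪T y, y⟫_ℂ) * (t * t) +
        (2 * RCLike.re (⟪T x, y⟫_ℂ)) * t + RCLike.re (⟪T x, x⟫_ℂ) := by
      intro t
      have h0 := hpos' (x + (t : ℂ) • y)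
      have hTx : T (x + (t : ℂ) • y) = T x + (t : ℂ) • T y := by
        rw [map_add, map_smul]
      have e1 : ∀ z : ℂ, RCLike.re (((t:ℝ) : ℂ) * z) = t * RCLike.re z := by
        intro z
        simp [RCLike.re_to_complex, Complex.mul_re]
      have expand : RCLike.re (⟪T (x + (t : ℂ) • y), x + (t : ℂ) • y⟫_ℂ)
          = RCLike.re (⟪T x, x⟫_ℂ) + 2 * t * RCLike.re (⟪T x, y⟫_ℂ)
            + t * t * RCLike.re (⟪T y, y⟫_ℂ) := by
        rw [hTx, inner_add_left, inner_add_right, inner_add_right, inner_smul_left,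
          inner_smul_right, inner_smul_left, inner_smul_right, Complex.conj_ofReal]
        simp only [map_add]
        simp only [e1]
        rw [hsym y x]
        ring
      rw [expand] at h0
      nlinarith [h0]
    have hd := discrim_le_zero hq
    rw [discrim] at hd
    nlinarith [hd]
  have key : ‖T ξ‖ ^ 2 ≤ RCLike.re (⟪T ξ, ξ⟫_ℂ) := by
    rcases eq_or_ne (T ξ) 0 with h | h
    · rw [h]; simpa using hpos' ξ
    · have h1 := hCS ξ (T ξ)
      rw [inner_self_eq_norm_sq] at h1
      have h2 : RCLike.re (⟪T (T ξ), T ξ⟫_ℂ) ≤ ‖T ξ‖ ^ 2 := hle (T ξ)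
      have h3 : (0:ℝ) < ‖T ξ‖ ^ 2 := by
        have := norm_pos_iff.mpr h
        positivity
      nlinarith [hpos' ξ]
  constructor
  · calc ‖∑ i ∈ F, A i (adjoint (A i) ξ)‖ ^ 2 = ‖T ξ‖ ^ 2 := by rw [hTapp]
      _ ≤ RCLike.re (⟪T ξ, ξ⟫_ℂ) := key
      _ = _ := hre ξ
  · rw [← hre ξ]; exact hle ξ


lemma geomBound {r : ℕ} {x : ℝ} (h0 : 0 ≤ x) (h1 : x < 1) (D : Finset (Fin r → ℕ)) :
    ∑ n ∈ D, x ^ (∑ j, n j) ≤ ((1 - x)⁻¹) ^ r := by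
  classical
  set N := D.sup (fun n => Finset.univ.sup n) with hN
  have hsub : D ⊆ Fintype.piFinset (fun _ : Fin r => Finset.range (N + 1)) := by
    intro n hn
    rw [Fintype.mem_piFinset]
    intro j
    rw [Finset.mem_range]
    have : n j ≤ N := le_trans (Finset.le_sup (Finset.mem_univ j)) (Finset.le_sup hn)
    omega
  have hgeom : ∀ M : ℕ, ∑ i ∈ Finset.range M, x ^ i ≤ (1 - x)⁻¹ := by
    intro M
    have hsum : Summable (fun i : ℕ => x ^ i) := summable_geometric_of_lt_one h0 h1
    have := Summable.sum_le_tsum (Finset.range M) (fun i _ => by positivity) hsum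
    rwa [tsum_geometric_of_lt_one h0 h1] at this
  calc ∑ n ∈ D, x ^ (∑ j, n j)
      ≤ ∑ n ∈ Fintype.piFinset (fun _ : Fin r => Finset.range (N + 1)), x ^ (∑ j, n j) :=
        Finset.sum_le_sum_of_subset_of_nonneg hsub (fun _ _ _ => by positivity)
    _ = ∏ _j : Fin r, ∑ i ∈ Finset.range (N + 1), x ^ i := by
        rw [Finset.prod_univ_sum]
        exact Finset.sum_congr rfl fun n _ => (Finset.prod_pow_eq_pow_sum _ _ _).symm
    _ ≤ ∏ _j : Fin r, (1 - x)⁻¹ := by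
        refine Finset.prod_le_prod (fun _ _ => ?_) (fun j _ => hgeom _)
        positivity
    _ = ((1 - x)⁻¹) ^ r := by simp

lemma Iic_pi_eq {r : ℕ} (c : Fin r → ℕ) :
    Finset.Iic c = Fintype.piFinset (fun j => Finset.Iic (c j)) := by
  ext m
  simp [Fintype.mem_piFinset, Pi.le_def]

lemma signSum {r : ℕ} (d : Fin r → ℕ) :
    ∑ m ∈ Finset.Iic (d ⊓ 1), (-1 : ℝ) ^ (∑ j, m j) = if d = 0 then 1 else 0 := by
  rw [Iic_pi_eq]
  rw [Finset.sum_congr rfl (fun m _ => (Finset.prod_pow_eq_pow_sum Finset.univ m (-1:ℝ)).symm),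
    ← Finset.prod_univ_sum]
  by_cases hd : d = 0
  · subst hd
    have h0 : Finset.Iic (0 : ℕ) = {0} := by ext i; simp
    simp [h0]
  · rw [if_neg hd]
    obtain ⟨j0, hj0⟩ : ∃ j, d j ≠ 0 := by
      by_contra hcon; push_neg at hcon; exact hd (funext fun j => hcon j)
    apply Finset.prod_eq_zero (Finset.mem_univ j0)
    have h1 : (d ⊓ 1) j0 = 1 := by
      simp only [Pi.inf_apply, Pi.one_apply]
      omega
    rw [h1]
    have h2 : Finset.Iic (1 : ℕ) = {0, 1} := rfl
    rw [h2]
    norm_num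

end OpAux

section PoissonAux

open scoped InnerProductSpace

/-- The index type `Σ ν, {m ≤ d(ν) ⊓ e}` used to reindex the double sum. -/
abbrev SigIdx {r : ℕ} (K : KGraph r) : Type :=
  Σ ν : K.Λ, {m : Fin r → ℕ // m ∈ Finset.Iic (K.deg ν ⊓ 1)}

lemma SigIdx.ext' {r : ℕ} {K : KGraph r} {σ τ : SigIdx K}
    (h1 : σ.1 = τ.1) (h2 : σ.2.1 = τ.2.1) : σ = τ := by
  obtain ⟨ν, m⟩ := σ
  obtain ⟨ν', m'⟩ := τ
  dsimp at h1
  subst h1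
  dsimp at h2
  exact congrArg _ (Subtype.ext h2)

lemma KGraph.degSum_comp {r : ℕ} (K : KGraph r) (l m : K.Λ) (h : K.src l = K.tgt m) :
    K.degSum (K.comp l m) = K.degSum l + K.degSum m := by
  unfold KGraph.degSum
  rw [K.deg_comp l m h]
  simp [Finset.sum_add_distrib]

end PoissonAux


section SummableAux

open scoped InnerProductSpace

universe v

variable {r : ℕ} (K : KGraph r) {H : Type v}
  [NormedAddCommGroup H] [InnerProductSpace ℂ H] [CompleteSpace H]

/-- The function whose summability is the analytic core of the argument. -/
noncomputable def hfun (V : K.Λ → H →L[ℂ] H) (s : ℝ) (ξ : H) : SigIdx K → H :=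
  fun σ =>
    (((-1 : ℝ) ^ (∑ j, σ.2.1 j) * s ^ (2 * K.degSum σ.1) : ℝ) : ℂ) •
      V σ.1 (adjoint (V σ.1) ξ)

lemma hfun_summable (V : K.Λ → H →L[ℂ] H) (hV : IsLambdaContraction K V)
    {s : ℝ} (hs0 : 0 < s) (hs1 : s < 1) (ξ : H) :
    Summable (hfun K V s ξ) := by
  classical
  have hx0 : (0:ℝ) ≤ s ^ 2 := sq_nonneg s
  have hx1 : s ^ 2 < 1 := by nlinarith
  set x : ℝ := s ^ 2 with hxdef
  set C : ℝ := ((1 - x)⁻¹) ^ r with hC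
  set C2 : ℝ := ((Finset.Iic (1 : Fin r → ℕ)).card : ℝ) with hC2
  have hC0 : 0 ≤ C := by
    rw [hC]
    have : (0:ℝ) ≤ (1 - x)⁻¹ := by
      have : (0:ℝ) < 1 - x := by linarith
      positivity
    positivity
  have hC20 : 0 ≤ C2 := by rw [hC2]; positivity
  set a : K.Λ → ℝ := fun ν => ‖adjoint (V ν) ξ‖ ^ 2 with hadef
  set ρ : K.Λ → ℝ := fun ν => x ^ K.degSum ν * a ν with hρdef
  have ha0 : ∀ ν, 0 ≤ a ν := fun ν => by rw [hadef]; positivity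
  have hρ0 : ∀ ν, 0 ≤ ρ ν := fun ν => by
    rw [hρdef]; exact mul_nonneg (pow_nonneg hx0 _) (ha0 ν)
  -- quadratic estimate over sub-finsets of the sigma type, all of the same degree,
  -- with injective first components
  have hquadS : ∀ (n : Fin r → ℕ) (T : Finset (SigIdx K)),
      (∀ σ ∈ T, K.deg σ.1 = n) →
      (∀ σ ∈ T, ∀ τ ∈ T, σ.1 = τ.1 → σ = τ) →
      ‖∑ σ ∈ T, V σ.1 (adjoint (V σ.1) ξ)‖ ^ 2 ≤ ∑ σ ∈ T, a σ.1 ∧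
        ∑ σ ∈ T, a σ.1 ≤ ‖ξ‖ ^ 2 := by
    intro n T hdeg hinj
    have hpos : ((1 : H →L[ℂ] H) -
        ∑ σ ∈ T, V σ.1 ∘L adjoint (V σ.1)).IsPositive := by
      have himg : ∑ σ ∈ T, V σ.1 ∘L adjoint (V σ.1)
          = ∑ ν ∈ T.image Sigma.fst, V ν ∘L adjoint (V ν) := by
        rw [Finset.sum_image]
        intro σ hσ τ hτ h
        exact hinj σ hσ τ hτ h
      rw [himg]
      refine hV.2.2.1 n _ (fun ν hν => ?_)
      obtain ⟨σ, hσ, rfl⟩ := Finset.mem_image.mp hν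
      exact hdeg σ hσ
    exact opEst T (fun σ => V σ.1) hpos ξ
  -- summability of the scalar majorant ρ
  have hρsum : ∀ F : Finset K.Λ, ∑ ν ∈ F, ρ ν ≤ C * ‖ξ‖ ^ 2 := by
    intro F
    rw [← Finset.sum_fiberwise_of_maps_to (fun ν hν => Finset.mem_image_of_mem K.deg hν) ρ]
    have hquad : ∀ (n : Fin r → ℕ) (F : Finset K.Λ), (∀ ν ∈ F, K.deg ν = n) →
        ∑ ν ∈ F, a ν ≤ ‖ξ‖ ^ 2 :=
      fun n F hF => (opEst F V (hV.2.2.1 n F hF) ξ).2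
    calc ∑ n ∈ F.image K.deg, ∑ ν ∈ F.filter (fun ν => K.deg ν = n), ρ ν
        ≤ ∑ n ∈ F.image K.deg, x ^ (∑ j, n j) * ‖ξ‖ ^ 2 := by
          refine Finset.sum_le_sum fun n _ => ?_
          have hcong : ∀ ν ∈ F.filter (fun ν => K.deg ν = n),
              ρ ν = x ^ (∑ j, n j) * a ν := by
            intro ν hν
            have hdν : K.deg ν = n := (Finset.mem_filter.mp hν).2
            have hds : K.degSum ν = ∑ j, n j := by
              unfold KGraph.degSum; rw [hdν]
            rw [hρdef]
            dsimp only
            rw [hds]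
          rw [Finset.sum_congr rfl hcong, ← Finset.mul_sum]
          exact mul_le_mul_of_nonneg_left
            (hquad n _ (fun ν hν => (Finset.mem_filter.mp hν).2)) (pow_nonneg hx0 _)
      _ = (∑ n ∈ F.image K.deg, x ^ (∑ j, n j)) * ‖ξ‖ ^ 2 := (Finset.sum_mul _ _ _).symm
      _ ≤ C * ‖ξ‖ ^ 2 :=
          mul_le_mul_of_nonneg_right (geomBound hx0 hx1 _) (by positivity)
  have hρsummable : Summable ρ :=
    summable_of_sum_le (fun ν => hρ0 ν) hρsum
  -- master estimate
  have key : ∀ T : Finset (SigIdx K),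
      ‖∑ σ ∈ T, hfun K V s ξ σ‖ ^ 2 ≤
        (C2 * C) * (C2 * ∑ ν ∈ T.image Sigma.fst, ρ ν) := by
    intro T
    set keyf : SigIdx K → ((Fin r → ℕ) × (Fin r → ℕ)) :=
      fun σ => (σ.2.1, K.deg σ.1) with hkeyf
    have hsplit : ∑ σ ∈ T, hfun K V s ξ σ
        = ∑ k ∈ T.image keyf, ∑ σ ∈ T.filter (fun σ => keyf σ = k), hfun K V s ξ σ :=
      (Finset.sum_fiberwise_of_maps_to (fun σ hσ => Finset.mem_image_of_mem keyf hσ) _).symm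
    set t : (Fin r → ℕ) × (Fin r → ℕ) → ℝ :=
      fun k => ∑ σ ∈ T.filter (fun σ => keyf σ = k), a σ.1 with ht
    have ht0 : ∀ k, 0 ≤ t k := fun k => Finset.sum_nonneg fun σ _ => ha0 _
    have hmemdeg : ∀ k, ∀ σ ∈ T.filter (fun σ => keyf σ = k), K.deg σ.1 = k.2 := by
      intro k σ hσ
      exact congrArg Prod.snd (Finset.mem_filter.mp hσ).2
    have hmemm : ∀ k, ∀ σ ∈ T.filter (fun σ => keyf σ = k), σ.2.1 = k.1 := by
      intro k σ hσ
      exact congrArg Prod.fst (Finset.mem_filter.mp hσ).2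
    have hinj : ∀ k, ∀ σ ∈ T.filter (fun σ => keyf σ = k),
        ∀ τ ∈ T.filter (fun σ => keyf σ = k), σ.1 = τ.1 → σ = τ := by
      intro k σ hσ τ hτ h1
      refine SigIdx.ext' h1 ?_
      rw [hmemm k σ hσ, hmemm k τ hτ]
    have hfiber : ∀ k ∈ T.image keyf,
        ‖∑ σ ∈ T.filter (fun σ => keyf σ = k), hfun K V s ξ σ‖
          ≤ x ^ (∑ j, k.2 j) * Real.sqrt (t k) := by
      intro k hk
      have hcongr : ∀ σ ∈ T.filter (fun σ => keyf σ = k),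
          hfun K V s ξ σ =
            (((-1 : ℝ) ^ (∑ j, k.1 j) * x ^ (∑ j, k.2 j) : ℝ) : ℂ) •
              V σ.1 (adjoint (V σ.1) ξ) := by
        intro σ hσ
        have e1 : (∑ j, σ.2.1 j) = ∑ j, k.1 j := by rw [hmemm k σ hσ]
        have e2 : K.degSum σ.1 = ∑ j, k.2 j := by
          unfold KGraph.degSum
          rw [hmemdeg k σ hσ]
        unfold hfun
        rw [e1, e2, hxdef, ← pow_mul]
      rw [Finset.sum_congr rfl hcongr, ← Finset.smul_sum, norm_smul]
      have hnorm : ‖(((-1 : ℝ) ^ (∑ j, k.1 j) * x ^ (∑ j, k.2 j) : ℝ) : ℂ)‖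
          = x ^ (∑ j, k.2 j) := by
        rw [Complex.norm_real, Real.norm_eq_abs, abs_mul, abs_pow, abs_pow, abs_neg,
          abs_one, one_pow, one_mul, abs_of_nonneg hx0]
      rw [hnorm]
      refine mul_le_mul_of_nonneg_left ?_ (pow_nonneg hx0 _)
      rw [Real.le_sqrt (norm_nonneg _)]
      · exact (hquadS k.2 _ (hmemdeg k) (hinj k)).1
      · exact ht0 k
    have hnormsum : ‖∑ σ ∈ T, hfun K V s ξ σ‖
        ≤ ∑ k ∈ T.image keyf, x ^ (∑ j, k.2 j) * Real.sqrt (t k) := by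
      rw [hsplit]
      exact (norm_sum_le _ _).trans (Finset.sum_le_sum hfiber)
    have hCS : (∑ k ∈ T.image keyf, x ^ (∑ j, k.2 j) * Real.sqrt (t k)) ^ 2
        ≤ (∑ k ∈ T.image keyf, x ^ (∑ j, k.2 j)) *
          (∑ k ∈ T.image keyf, x ^ (∑ j, k.2 j) * t k) := by
      have hcs := Finset.sum_mul_sq_le_sq_mul_sq (T.image keyf)
        (fun k => Real.sqrt (x ^ (∑ j, k.2 j)))
        (fun k => Real.sqrt (x ^ (∑ j, k.2 j)) * Real.sqrt (t k))
      have e1 : ∀ k ∈ T.image keyf,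
          Real.sqrt (x ^ (∑ j, k.2 j)) *
            (Real.sqrt (x ^ (∑ j, k.2 j)) * Real.sqrt (t k))
            = x ^ (∑ j, k.2 j) * Real.sqrt (t k) := by
        intro k _
        rw [← mul_assoc, Real.mul_self_sqrt (pow_nonneg hx0 _)]
      have e2 : ∀ k ∈ T.image keyf,
          Real.sqrt (x ^ (∑ j, k.2 j)) ^ 2 = x ^ (∑ j, k.2 j) :=
        fun k _ => Real.sq_sqrt (pow_nonneg hx0 _)
      have e3 : ∀ k ∈ T.image keyf,
          (Real.sqrt (x ^ (∑ j, k.2 j)) * Real.sqrt (t k)) ^ 2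
            = x ^ (∑ j, k.2 j) * t k := by
        intro k _
        rw [mul_pow, Real.sq_sqrt (pow_nonneg hx0 _), Real.sq_sqrt (ht0 k)]
      rw [Finset.sum_congr rfl e1, Finset.sum_congr rfl e2, Finset.sum_congr rfl e3] at hcs
      exact hcs
    have hfac1 : ∑ k ∈ T.image keyf, x ^ (∑ j, k.2 j) ≤ C2 * C := by
      have hsub : T.image keyf ⊆
          (Finset.Iic (1 : Fin r → ℕ)) ×ˢ (T.image fun σ => K.deg σ.1) := by
        intro k hk
        obtain ⟨σ, hσ, rfl⟩ := Finset.mem_image.mp hk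
        rw [Finset.mem_product]
        refine ⟨Finset.mem_Iic.mpr ((Finset.mem_Iic.mp σ.2.2).trans inf_le_right), ?_⟩
        exact Finset.mem_image_of_mem _ hσ
      calc ∑ k ∈ T.image keyf, x ^ (∑ j, k.2 j)
          ≤ ∑ k ∈ (Finset.Iic (1 : Fin r → ℕ)) ×ˢ (T.image fun σ => K.deg σ.1),
              x ^ (∑ j, k.2 j) :=
            Finset.sum_le_sum_of_subset_of_nonneg hsub (fun _ _ _ => pow_nonneg hx0 _)
        _ = ∑ _m ∈ Finset.Iic (1 : Fin r → ℕ),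
              ∑ n ∈ T.image (fun σ => K.deg σ.1), x ^ (∑ j, n j) := by
            rw [Finset.sum_product]
        _ = C2 * ∑ n ∈ T.image (fun σ => K.deg σ.1), x ^ (∑ j, n j) := by
            rw [Finset.sum_const, nsmul_eq_mul, hC2]
        _ ≤ C2 * C := mul_le_mul_of_nonneg_left (geomBound hx0 hx1 _) hC20
    have hfac2 : ∑ k ∈ T.image keyf, x ^ (∑ j, k.2 j) * t k
        ≤ C2 * ∑ ν ∈ T.image Sigma.fst, ρ ν := by
      have hterm : ∀ k ∈ T.image keyf,
          x ^ (∑ j, k.2 j) * t k = ∑ σ ∈ T.filter (fun σ => keyf σ = k), ρ σ.1 := by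
        intro k hk
        rw [ht]
        dsimp only
        rw [Finset.mul_sum]
        refine Finset.sum_congr rfl fun σ hσ => ?_
        have e2 : K.degSum σ.1 = ∑ j, k.2 j := by
          unfold KGraph.degSum
          rw [hmemdeg k σ hσ]
        rw [hρdef]
        dsimp only
        rw [e2]
      rw [Finset.sum_congr rfl hterm,
        Finset.sum_fiberwise_of_maps_to (fun σ hσ => Finset.mem_image_of_mem keyf hσ)
          (fun σ => ρ σ.1),
        ← Finset.sum_fiberwise_of_maps_to (fun σ hσ => Finset.mem_image_of_mem Sigma.fst hσ)
          (fun σ => ρ σ.1),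
        Finset.mul_sum]
      refine Finset.sum_le_sum fun ν hν => ?_
      have hconst : ∀ σ ∈ T.filter (fun σ => σ.1 = ν), ρ σ.1 = ρ ν := by
        intro σ hσ
        rw [(Finset.mem_filter.mp hσ).2]
      rw [Finset.sum_congr rfl hconst, Finset.sum_const, nsmul_eq_mul]
      refine mul_le_mul_of_nonneg_right ?_ (hρ0 ν)
      rw [hC2]
      have hcard : (T.filter (fun σ => σ.1 = ν)).card
          ≤ (Finset.Iic (1 : Fin r → ℕ)).card := by
        refine Finset.card_le_card_of_injOn (fun σ => σ.2.1) ?_ ?_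
        · intro σ hσ
          exact Finset.mem_Iic.mpr ((Finset.mem_Iic.mp σ.2.2).trans inf_le_right)
        · intro σ hσ τ hτ h2
          exact SigIdx.ext'
            (((Finset.mem_filter.mp hσ).2).trans ((Finset.mem_filter.mp hτ).2).symm) h2
      exact_mod_cast hcard
    calc ‖∑ σ ∈ T, hfun K V s ξ σ‖ ^ 2
        ≤ (∑ k ∈ T.image keyf, x ^ (∑ j, k.2 j) * Real.sqrt (t k)) ^ 2 :=
          pow_le_pow_left₀ (norm_nonneg _) hnormsum 2
      _ ≤ (∑ k ∈ T.image keyf, x ^ (∑ j, k.2 j)) *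
            (∑ k ∈ T.image keyf, x ^ (∑ j, k.2 j) * t k) := hCS
      _ ≤ (C2 * C) * (C2 * ∑ ν ∈ T.image Sigma.fst, ρ ν) := by
          refine mul_le_mul hfac1 hfac2 ?_ (mul_nonneg hC20 hC0)
          exact Finset.sum_nonneg fun k _ => mul_nonneg (pow_nonneg hx0 _) (ht0 k)
  -- conclusion via the Cauchy criterion
  rw [summable_iff_vanishing_norm]
  intro ε hε
  have hB : (0:ℝ) < (C2 * C) * C2 + 1 := by positivity
  set δ : ℝ := ε ^ 2 / ((C2 * C) * C2 + 1) with hδ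
  have hδ0 : 0 < δ := by rw [hδ]; positivity
  obtain ⟨G, hG⟩ := summable_iff_vanishing_norm.mp hρsummable δ hδ0
  refine ⟨G.sigma (fun ν => Finset.univ), fun T hT => ?_⟩
  have hdisj : Disjoint (T.image Sigma.fst) G := by
    rw [Finset.disjoint_left]
    intro ν hν hνG
    obtain ⟨σ, hσT, rfl⟩ := Finset.mem_image.mp hν
    exact (Finset.disjoint_left.mp hT hσT)
      (Finset.mem_sigma.mpr ⟨hνG, Finset.mem_univ _⟩)
  have h1 : ∑ ν ∈ T.image Sigma.fst, ρ ν < δ := by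
    have := hG _ hdisj
    rwa [Real.norm_eq_abs,
      abs_of_nonneg (Finset.sum_nonneg fun ν _ => hρ0 ν)] at this
  have h2 : ‖∑ σ ∈ T, hfun K V s ξ σ‖ ^ 2 < ε ^ 2 := by
    calc ‖∑ σ ∈ T, hfun K V s ξ σ‖ ^ 2
        ≤ (C2 * C) * (C2 * ∑ ν ∈ T.image Sigma.fst, ρ ν) := key T
      _ ≤ (C2 * C) * (C2 * δ) := by
          refine mul_le_mul_of_nonneg_left ?_ (mul_nonneg hC20 hC0)
          exact mul_le_mul_of_nonneg_left h1.le hC20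
      _ = ((C2 * C) * C2) * δ := by ring
      _ < ((C2 * C) * C2 + 1) * δ :=
          mul_lt_mul_of_pos_right (lt_add_one _) hδ0
      _ = ε ^ 2 := by
          rw [hδ, mul_comm]
          exact div_mul_cancel₀ _ (ne_of_gt hB)
  exact lt_of_pow_lt_pow_left₀ 2 (le_of_lt hε) h2


lemma hfun_hasSum (V : K.Λ → H →L[ℂ] H) (hV : IsLambdaContraction K V)
    {s : ℝ} (hs0 : 0 < s) (hs1 : s < 1) (ξ : H) :
    HasSum (hfun K V s ξ) ξ := by
  classical
  have hsum := hfun_summable K V hV hs0 hs1 ξ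
  have hfib : ∀ ν : K.Λ,
      HasSum (fun c : {m : Fin r → ℕ // m ∈ Finset.Iic (K.deg ν ⊓ 1)} =>
        hfun K V s ξ ⟨ν, c⟩)
        (if K.deg ν = 0 then V ν (adjoint (V ν) ξ) else 0) := by
    intro ν
    have hfin := hasSum_fintype
      (fun c : {m : Fin r → ℕ // m ∈ Finset.Iic (K.deg ν ⊓ 1)} => hfun K V s ξ ⟨ν, c⟩)
    have hval : ∑ c : {m : Fin r → ℕ // m ∈ Finset.Iic (K.deg ν ⊓ 1)},
        hfun K V s ξ ⟨ν, c⟩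
        = (if K.deg ν = 0 then V ν (adjoint (V ν) ξ) else 0) := by
      have h1 : ∀ c : {m : Fin r → ℕ // m ∈ Finset.Iic (K.deg ν ⊓ 1)},
          hfun K V s ξ ⟨ν, c⟩
            = (((-1 : ℝ) ^ (∑ j, c.1 j) : ℝ) : ℂ) •
                ((((s ^ (2 * K.degSum ν) : ℝ)) : ℂ) • V ν (adjoint (V ν) ξ)) := by
        intro c
        unfold hfun
        rw [smul_smul, ← Complex.ofReal_mul]
      rw [Finset.sum_congr rfl (fun c _ => h1 c), ← Finset.sum_smul]
      have h2 : (∑ c : {m : Fin r → ℕ // m ∈ Finset.Iic (K.deg ν ⊓ 1)},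
          (((-1 : ℝ) ^ (∑ j, c.1 j) : ℝ) : ℂ))
          = (((if K.deg ν = 0 then (1:ℝ) else 0) : ℝ) : ℂ) := by
        rw [← Complex.ofReal_sum]
        congr 1
        rw [Finset.sum_coe_sort (Finset.Iic (K.deg ν ⊓ 1))
          (fun m => (-1:ℝ) ^ (∑ j, m j))]
        exact signSum (K.deg ν)
      rw [h2]
      by_cases hν : K.deg ν = 0
      · rw [if_pos hν, if_pos hν]
        have hds : K.degSum ν = 0 := by
          unfold KGraph.degSum
          rw [hν]
          simp
        rw [hds]
        norm_num
      · rw [if_neg hν, if_neg hν]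
        norm_num
    rw [← hval]
    exact hfin
  have hφ : HasSum (fun ν : K.Λ => if K.deg ν = 0 then V ν (adjoint (V ν) ξ) else 0) ξ := by
    have h5 := hV.2.2.2.2 ξ
    have hsupp : Function.support (fun ν : K.Λ =>
        if K.deg ν = 0 then V ν (adjoint (V ν) ξ) else 0) ⊆ {a : K.Λ | K.IsVertex a} := by
      intro ν hν
      by_contra hc
      apply hν
      have hne : ¬ (K.deg ν = 0) := hc
      simp [hne]
    rw [← hasSum_subtype_iff_of_support_subset hsupp]
    have heq : ((fun ν : K.Λ => if K.deg ν = 0 then V ν (adjoint (V ν) ξ) else 0) ∘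
        Subtype.val) = fun q : {a : K.Λ | K.IsVertex a} => V q.1 ξ := by
      funext q
      have hq : K.deg q.1 = 0 := q.2
      simp only [Function.comp_apply, if_pos hq]
      have hsa : adjoint (V q.1) = V q.1 :=
        ContinuousLinearMap.isSelfAdjoint_iff'.mp (hV.2.2.2.1 q.1 q.2).1
      rw [hsa]
      calc V q.1 (V q.1 ξ) = (V q.1 ∘L V q.1) ξ := rfl
        _ = V q.1 ξ := by rw [(hV.2.2.2.1 q.1 q.2).2]
    rw [heq]
    exact h5
  have hfibS := hsum.hasSum.sigma hfib
  have hξ : (∑' σ, hfun K V s ξ σ) = ξ := hfibS.unique hφ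
  have hfin := hsum.hasSum
  rwa [hξ] at hfin

end SummableAux

/-- For a `Λ`-contraction `V` and `s ∈ (0,1)`, the defect operator
`Δ_s(V)` satisfies `Σ_{λ∈Λ} s^{2|λ|} V_λ Δ_s(V) V_λ* = I` in the strong operator
topology. -/
theorem poisson_absorption_identity
    {r : ℕ} (K : KGraph r) {H : Type u}
    [NormedAddCommGroup H] [InnerProductSpace ℂ H] [CompleteSpace H]
    (V : K.Λ → H →L[ℂ] H) (hV : IsLambdaContraction K V)
    (s : ℝ) (hs : s ∈ Set.Ioo (0 : ℝ) 1)
    (D : H →L[ℂ] H) (hD : IsDefectOperator K V s D) :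
    ∀ ξ : H,
      HasSum (fun l : K.Λ => ((s ^ (2 * K.degSum l) : ℝ) : ℂ) • V l (D (adjoint (V l) ξ))) ξ := by
  classical
  intro ξ
  obtain ⟨hs0, hs1⟩ := hs
  set G2 : K.Λ × {m : K.Λ // K.deg m ≤ 1} → H := fun p =>
    ((s ^ (2 * K.degSum p.1) : ℝ) : ℂ) •
      ((((-(s ^ 2)) ^ K.degSum p.2.1 : ℝ)) : ℂ) •
        V p.1 (V p.2.1 (adjoint (V p.2.1) (adjoint (V p.1) ξ))) with hG2
  -- fiberwise sums over the first coordinate, from the defect-operator expansion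
  have hfibL : ∀ l : K.Λ, HasSum (fun m => G2 (l, m))
      (((s ^ (2 * K.degSum l) : ℝ) : ℂ) • V l (D (adjoint (V l) ξ))) := by
    intro l
    have h6 := hD (adjoint (V l) ξ)
    have h7 := (V l).hasSum h6
    have h8 := h7.const_smul ((s ^ (2 * K.degSum l) : ℝ) : ℂ)
    convert h8 using 1
    funext m
    rw [hG2]
    dsimp only
    rw [map_smul]
  -- the support of `G2` consists of composable pairs
  set P : Set (K.Λ × {m : K.Λ // K.deg m ≤ 1}) := {p | K.src p.1 = K.tgt p.2.1} with hP
  have hsupp : Function.support G2 ⊆ P := by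
    intro p hp
    by_contra hc
    apply hp
    have hz : V p.1 ∘L V p.2.1 = 0 := hV.1 p.1 p.2.1 hc
    have hzz : V p.1 (V p.2.1 (adjoint (V p.2.1) (adjoint (V p.1) ξ))) = 0 := by
      have := congrArg
        (fun (T : H →L[ℂ] H) => T (adjoint (V p.2.1) (adjoint (V p.1) ξ))) hz
      simpa using this
    rw [hG2]
    dsimp only
    rw [hzz, smul_zero, smul_zero]
  -- the bijection between composable pairs and the sigma-type
  have hfwdmem : ∀ q : P, K.deg q.1.2.1 ∈
      Finset.Iic (K.deg (K.comp q.1.1 q.1.2.1) ⊓ 1) := by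
    intro q
    rw [Finset.mem_Iic]
    refine le_inf ?_ q.1.2.2
    rw [K.deg_comp _ _ q.2]
    exact le_add_self
  set fwd : P → SigIdx K := fun q =>
    ⟨K.comp q.1.1 q.1.2.1, ⟨K.deg q.1.2.1, hfwdmem q⟩⟩ with hfwd
  have hbij : Function.Bijective fwd := by
    constructor
    · rintro ⟨⟨l, ⟨μ, hμ⟩⟩, hsrc⟩ ⟨⟨l', ⟨μ', hμ'⟩⟩, hsrc'⟩ heq
      have hsrc1 : K.src l = K.tgt μ := hsrc
      have hsrc1' : K.src l' = K.tgt μ' := hsrc'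
      have h1 : K.comp l μ = K.comp l' μ' := congrArg Sigma.fst heq
      have h2 : K.deg μ = K.deg μ' :=
        congrArg (fun σ : SigIdx K => (σ.2.1 : Fin r → ℕ)) heq
      have hdl : K.deg l = K.deg l' := by
        have h3 : K.deg l + K.deg μ = K.deg l' + K.deg μ' := by
          rw [← K.deg_comp l μ hsrc1, ← K.deg_comp l' μ' hsrc1', h1]
        rw [h2] at h3
        exact add_right_cancel h3
      obtain ⟨p0, hp0, huniq⟩ := K.factorisation (K.comp l μ) (K.deg l) (K.deg μ)
        (K.deg_comp l μ hsrc1)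
      have e1 : (l, μ) = p0 := huniq _ ⟨rfl, rfl, hsrc1, rfl⟩
      have e2 : (l', μ') = p0 := huniq _ ⟨hdl.symm, h2.symm, hsrc1', h1.symm⟩
      have e3 := e1.trans e2.symm
      injection e3 with ha hb
      subst ha
      subst hb
      rfl
    · rintro ⟨ν, m, hm⟩
      have hm1 : m ≤ K.deg ν ⊓ 1 := Finset.mem_Iic.mp hm
      have hmν : m ≤ K.deg ν := hm1.trans inf_le_left
      have hsplit : K.deg ν = (K.deg ν - m) + m := (tsub_add_cancel_of_le hmν).symm
      obtain ⟨⟨l, μ⟩, ⟨hdl, hdμ, hsrc, hcomp⟩, -⟩ :=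
        K.factorisation ν (K.deg ν - m) m hsplit
      have hμ1 : K.deg μ ≤ 1 := by
        rw [hdμ]
        exact hm1.trans inf_le_right
      refine ⟨⟨(l, ⟨μ, hμ1⟩), hsrc⟩, ?_⟩
      subst hcomp
      exact congrArg (Sigma.mk _) (Subtype.ext hdμ)
  -- compatibility of the two parametrisations
  have hcompat : ∀ q : P, G2 q.1 = hfun K V s ξ (fwd q) := by
    rintro ⟨⟨l, ⟨μ, hμ⟩⟩, hq⟩
    have hq' : K.src l = K.tgt μ := hq
    have hVc : V l ∘L V μ = V (K.comp l μ) := hV.2.1 l μ hq'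
    have hadj : adjoint (V (K.comp l μ)) = adjoint (V μ) ∘L adjoint (V l) := by
      rw [← hVc, ContinuousLinearMap.adjoint_comp]
    have hvec : V l (V μ (adjoint (V μ) (adjoint (V l) ξ)))
        = V (K.comp l μ) (adjoint (V (K.comp l μ)) ξ) := by
      rw [hadj]
      calc V l (V μ (adjoint (V μ) (adjoint (V l) ξ)))
          = (V l ∘L V μ) ((adjoint (V μ) ∘L adjoint (V l)) ξ) := rfl
        _ = V (K.comp l μ) ((adjoint (V μ) ∘L adjoint (V l)) ξ) := by rw [hVc]
    have hdsum : K.degSum (K.comp l μ) = K.degSum l + K.degSum μ := K.degSum_comp l μ hq'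
    rw [hG2]
    unfold hfun
    dsimp only
    rw [smul_smul, ← Complex.ofReal_mul, hvec]
    congr 1
    rw [hdsum]
    rw [show (∑ j, K.deg μ j) = K.degSum μ from rfl]
    rw [neg_pow, mul_add, pow_add, ← pow_mul]
    ring
  -- transport the sum along the bijection and extend by zero off the support
  have hGsum : HasSum G2 ξ := by
    have hh := hfun_hasSum K V hV hs0 hs1 ξ
    have h9 : HasSum (fun q : P => G2 q.1) ξ := by
      have h10 := ((Equiv.ofBijective fwd hbij).hasSum_iff
        (f := hfun K V s ξ) (a := ξ)).mpr hh
      convert h10 using 1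
      funext q
      exact hcompat q
    exact (hasSum_subtype_iff_of_support_subset hsupp).mp h9
  exact hGsum.prod_fiberwise hfibL
end
end

section
/- Let Λ be a rank-r graph, V = (V_λ)_{λ∈Λ} a Λ-contraction on a complex Hilbert space H, and s ∈ (0,1) such that the defect operator Δ_s(V) is positive. Then the map W_s : H → ℓ²(Λ; H) defined by W_s(ξ) = (s^{|λ|} Δ_s(V)^{1/2} V_λ* ξ)_{λ∈Λ} is a well-defined linear isometry into the Hilbert space ℓ²(Λ; H) of square-summable H-valued families indexed by the morphisms of Λ. -/
open scoped ComplexOrder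
open ContinuousLinearMap

noncomputable section

universe u

/-! Write `A ξ n = ∑_{λ ∈ Λ^n} ‖V_λ^* ξ‖²` (`levelNormSq`), so `0 ≤ A ξ n ≤ ‖ξ‖²` and
`A ξ 0 = ‖ξ‖²`. Unique factorisation gives `∑_{λ ∈ Λ^n} A (V_λ^* ξ) m = A ξ (n + m)`, and
expanding the defect operator gives `‖Δ_s^{1/2} η‖² = ∑_{m ≤ e} (-s²)^{|m|} A η m`. Hence, with
`G n = s^{2|n|} A ξ n`, the sum of `‖s^{|λ|} Δ_s^{1/2} V_λ^* ξ‖²` over `Λ^n` is the iterated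
difference `∑_{m ≤ e} (-1)^{|m|} G (n + m)`. As `s < 1`, `G` is summable, and the sum of these
differences over all `n` telescopes to `G 0 = ‖ξ‖²`. -/
section Summation

open Finset

variable {ι : Type*} [Fintype ι] [DecidableEq ι]

theorem sum_Iic_one_inter_Iic_neg_one_pow (k : ι → ℕ) :
    ∑ m ∈ Iic 1 ∩ Iic k, (-1 : ℝ) ^ ∑ i, m i = if k = 0 then 1 else 0 := by
  calc ∑ m ∈ Iic 1 ∩ Iic k, (-1 : ℝ) ^ ∑ i, m i
      = ∑ m ∈ Fintype.piFinset fun i => Iic (1 ⊓ k i), ∏ i, (-1 : ℝ) ^ m i := by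
        simp only [prod_pow_eq_pow_sum]
        congr 1
        ext m
        simp [Pi.le_def, forall_and]
    _ = ∏ i, ∑ t ∈ Iic (1 ⊓ k i), (-1 : ℝ) ^ t := (prod_univ_sum _ _).symm
    _ = ∏ i, (if k i = 0 then 1 else 0) := by
        refine prod_congr rfl fun i _ => ?_
        by_cases h : k i = 0
        · simp [h, ← Nat.range_succ_eq_Iic]
        · rw [if_neg h, inf_eq_left.mpr (Nat.one_le_iff_ne_zero.mpr h), ← Nat.range_succ_eq_Iic]
          simp [sum_range_succ]
    _ = if k = 0 then 1 else 0 := by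
        rw [prod_boole]
        simp [funext_iff]

theorem summable_pow_sum {q : ℝ} (hq₀ : 0 ≤ q) (hq₁ : q < 1) :
    Summable fun n : ι → ℕ => q ^ ∑ i, n i := by
  refine summable_of_sum_le (c := ((1 - q)⁻¹) ^ Fintype.card ι) (fun n => by positivity)
    fun u => ?_
  calc ∑ n ∈ u, q ^ ∑ i, n i ≤ ∑ n ∈ Iic (u.sup id), ∏ i, q ^ n i := by
        simp only [prod_pow_eq_pow_sum]
        exact sum_le_sum_of_subset_of_nonneg (fun n hn => mem_Iic.mpr (le_sup (f := id) hn))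
          fun _ _ _ => by positivity
    _ = ∏ i, ∑ t ∈ Iic (u.sup id i), q ^ t := (prod_univ_sum _ _).symm
    _ ≤ ∏ _i : ι, (1 - q)⁻¹ := by
        gcongr with i
        exact sum_le_hasSum _ (fun _ _ => by positivity) (hasSum_geometric_of_lt_one hq₀ hq₁)
    _ = ((1 - q)⁻¹) ^ Fintype.card ι := by rw [prod_const, card_univ]

theorem hasSum_sum_Iic_one_neg_one_pow_mul {G : (ι → ℕ) → ℝ} (hG : Summable G) :
    HasSum (fun n => ∑ m ∈ Iic (1 : ι → ℕ), (-1) ^ (∑ i, m i) * G (n + m)) (G 0) := by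
  classical
  -- Swap the two sums: the coefficient of `G k` becomes `∑_{m ≤ 1, m ≤ k} (-1)^{|m|} = [k = 0]`.
  have hshift (m : ι → ℕ) :
      HasSum (fun n => G (n + m)) (∑' k, {k | m ≤ k}.indicator G k) := by
    have hind := (hG.indicator {k | m ≤ k}).hasSum
    refine (((add_left_injective m).hasSum_iff fun k hk => ?_).mpr hind).congr_fun fun n => ?_
    · exact Set.indicator_of_notMem (fun hmk => hk ⟨k - m, tsub_add_cancel_of_le hmk⟩) _
    · exact (Set.indicator_of_mem (le_add_self : m ≤ n + m) G).symm
  have hvalue : G 0 = ∑ m ∈ Iic 1, (-1) ^ (∑ i, m i) * ∑' k, {k | m ≤ k}.indicator G k := by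
    have hterms := hasSum_sum fun m (_ : m ∈ Iic (1 : ι → ℕ)) =>
      ((hG.indicator {k | m ≤ k}).hasSum).mul_left ((-1) ^ ∑ i, m i)
    refine (hasSum_ite_eq 0 (G 0)).unique (hterms.congr_fun fun k => ?_)
    have hfilter : {m ∈ Iic 1 | m ≤ k} = Iic 1 ∩ Iic k := by ext; simp
    simp only [Set.indicator_apply, Set.mem_ofPred_eq, mul_ite, mul_zero]
    rw [← sum_filter, ← sum_mul, hfilter, sum_Iic_one_inter_Iic_neg_one_pow]
    split_ifs with hk
    · rw [hk, one_mul]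
    · rw [zero_mul]
  rw [hvalue]
  exact hasSum_sum fun m _ => (hshift m).mul_left _

end Summation

theorem hasSum_of_hasSum_fiberwise_of_nonneg {α β : Type*} {f : α → ℝ} (hf : 0 ≤ f)
    (d : α → β) {g : β → ℝ} {a : ℝ} (hfib : ∀ b, HasSum (fun x : {x // d x = b} => f x) (g b))
    (hg : HasSum g a) : HasSum f a := by
  let e := Equiv.sigmaFiberEquiv d
  have hsummable : Summable (f ∘ e) :=
    (summable_sigma_of_nonneg fun x => hf (e x)).mpr
      ⟨fun b => (hfib b).summable, hg.summable.congr fun b => (hfib b).tsum_eq.symm⟩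
  have htotal : HasSum g (∑' x, f (e x)) := hsummable.hasSum.sigma hfib
  rw [← e.hasSum_iff, hg.unique htotal]
  exact hsummable.hasSum

section LpIsometry

variable {𝕜 ι E F : Type*} [NormedField 𝕜] [SeminormedAddCommGroup E] [NormedSpace 𝕜 E]
  [NormedAddCommGroup F] [NormedSpace 𝕜 F]

def lpIsometryOfHasSumNormSq (T : ι → E →ₗ[𝕜] F)
    (hT : ∀ x, HasSum (fun i => ‖T i x‖ ^ 2) (‖x‖ ^ 2)) : E →ₗᵢ[𝕜] lp (fun _ : ι => F) 2 :=
  have hmem (x : E) : Memℓp (fun i => T i x) 2 :=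
    (memℓp_gen_iff (by norm_num)).mpr (by simpa using (hT x).summable)
  { toFun x := ⟨fun i => T i x, hmem x⟩
    map_add' x y := by ext i; exact map_add (T i) x y
    map_smul' c x := by ext i; exact map_smul (T i) c x
    norm_map' x := by
      have hnorm :=
        lp.hasSum_norm (by norm_num) (⟨fun i => T i x, hmem x⟩ : lp (fun _ : ι => F) 2)
      simp only [ENNReal.toReal_ofNat, Real.rpow_two] at hnorm
      exact (pow_left_inj₀ (norm_nonneg _) (norm_nonneg _) two_ne_zero).mp (hnorm.unique (hT x)) }

end LpIsometry

namespace KGraph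

variable {r : ℕ} (K : KGraph r)

def compEquiv (n m : Fin r → ℕ) :
    {p : {l // K.deg l = n} × {l // K.deg l = m} // K.src p.1.1 = K.tgt p.2.1} ≃
      {l // K.deg l = n + m} :=
  Equiv.ofBijective
    (fun p => ⟨K.comp p.1.1.1 p.1.2.1, by rw [K.deg_comp _ _ p.2, p.1.1.2, p.1.2.2]⟩)
    ⟨fun ⟨⟨⟨l, hl⟩, ⟨μ, hμ⟩⟩, h⟩ ⟨⟨⟨l', hl'⟩, ⟨μ', hμ'⟩⟩, h'⟩ heq => by
      obtain ⟨_, -, huniq⟩ :=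
        K.factorisation (K.comp l μ) n m (by rw [K.deg_comp _ _ h, hl, hμ])
      have hpair : (l, μ) = (l', μ') := (huniq _ ⟨hl, hμ, h, rfl⟩).trans
        (huniq _ ⟨hl', hμ', h', (congrArg Subtype.val heq).symm⟩).symm
      simp only [Prod.mk.injEq] at hpair
      obtain ⟨rfl, rfl⟩ := hpair
      rfl,
    fun l => by
      obtain ⟨p, ⟨hp₁, hp₂, hp, hcomp⟩, -⟩ := K.factorisation l.1 n m l.2
      exact ⟨⟨⟨⟨p.1, hp₁⟩, ⟨p.2, hp₂⟩⟩, hp⟩, Subtype.ext hcomp⟩⟩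

@[simp]
theorem coe_compEquiv_apply (n m : Fin r → ℕ)
    (p : {p : {l // K.deg l = n} × {l // K.deg l = m} // K.src p.1.1 = K.tgt p.2.1}) :
    (K.compEquiv n m p : K.Λ) = K.comp p.1.1.1 p.1.2.1 :=
  rfl

end KGraph

open scoped InnerProductSpace

theorem re_inner_apply_adjoint_apply {𝕜 E F : Type*} [RCLike 𝕜] [NormedAddCommGroup E]
    [InnerProductSpace 𝕜 E] [CompleteSpace E] [NormedAddCommGroup F] [InnerProductSpace 𝕜 F]
    [CompleteSpace F] (T : F →L[𝕜] E) (x : E) :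
    RCLike.re ⟪x, T (adjoint T x)⟫_𝕜 = ‖adjoint T x‖ ^ 2 := by
  rw [apply_norm_sq_eq_inner_adjoint_right, adjoint_adjoint, comp_apply]

section Contraction

open Finset

variable {r : ℕ} {K : KGraph r} {H : Type u} [NormedAddCommGroup H] [InnerProductSpace ℂ H]
  [CompleteSpace H] {V : K.Λ → H →L[ℂ] H}

variable (K V) in
def levelNormSq (ξ : H) (n : Fin r → ℕ) : ℝ :=
  ∑' l : {l // K.deg l = n}, ‖adjoint (V l.1) ξ‖ ^ 2

theorem levelNormSq_nonneg (ξ : H) (n : Fin r → ℕ) : 0 ≤ levelNormSq K V ξ n :=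
  tsum_nonneg fun _ => sq_nonneg _

namespace IsLambdaContraction

theorem sum_norm_adjoint_apply_sq_le (hV : IsLambdaContraction K V) {n : Fin r → ℕ}
    (u : Finset {l // K.deg l = n}) (ξ : H) :
    ∑ l ∈ u, ‖adjoint (V l.1) ξ‖ ^ 2 ≤ ‖ξ‖ ^ 2 := by
  have hF : ∀ l ∈ u.map (Function.Embedding.subtype _), K.deg l = n := by simp +contextual
  have h := (hV.2.2.1 n _ hF).re_inner_nonneg_right ξ
  simp only [sub_apply, inner_sub_right, map_sub, _root_.sum_apply,
    inner_sum, map_sum, comp_apply, sum_map, re_inner_apply_adjoint_apply, sub_nonneg] at h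
  rwa [← inner_self_eq_norm_sq (𝕜 := ℂ)]

theorem hasSum_levelNormSq (hV : IsLambdaContraction K V) (ξ : H) (n : Fin r → ℕ) :
    HasSum (fun l : {l // K.deg l = n} => ‖adjoint (V l.1) ξ‖ ^ 2) (levelNormSq K V ξ n) :=
  (summable_of_sum_le (fun _ => sq_nonneg _) (hV.sum_norm_adjoint_apply_sq_le · ξ)).hasSum

theorem levelNormSq_le (hV : IsLambdaContraction K V) (ξ : H) (n : Fin r → ℕ) :
    levelNormSq K V ξ n ≤ ‖ξ‖ ^ 2 :=
  (hV.hasSum_levelNormSq ξ n).summable.tsum_le_of_sum_le (hV.sum_norm_adjoint_apply_sq_le · ξ)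

theorem levelNormSq_zero (hV : IsLambdaContraction K V) (ξ : H) :
    levelNormSq K V ξ 0 = ‖ξ‖ ^ 2 := by
  refine (hV.hasSum_levelNormSq ξ 0).unique ?_
  have h := ((hV.2.2.2.2 ξ).mapL (innerSL ℂ ξ)).mapL Complex.reCLM
  rw [← inner_self_eq_norm_sq (𝕜 := ℂ)]
  refine h.congr_fun fun a => ?_
  obtain ⟨hsa, hidem⟩ := hV.2.2.2.1 a.1 a.2
  rw [← re_inner_apply_adjoint_apply, hsa.adjoint_eq, ← comp_apply, hidem]
  rfl

theorem adjoint_apply_adjoint_apply (hV : IsLambdaContraction K V) {l μ : K.Λ}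
    (h : K.src l = K.tgt μ) (ξ : H) :
    adjoint (V μ) (adjoint (V l) ξ) = adjoint (V (K.comp l μ)) ξ := by
  rw [← hV.2.1 l μ h, adjoint_comp, comp_apply]

theorem adjoint_apply_adjoint_apply_of_ne (hV : IsLambdaContraction K V) {l μ : K.Λ}
    (h : K.src l ≠ K.tgt μ) (ξ : H) : adjoint (V μ) (adjoint (V l) ξ) = 0 := by
  rw [← comp_apply, ← adjoint_comp, hV.1 l μ h, map_zero, zero_apply]

theorem hasSum_levelNormSq_adjoint_apply (hV : IsLambdaContraction K V) (ξ : H)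
    (n m : Fin r → ℕ) :
    HasSum (fun l : {l // K.deg l = n} => levelNormSq K V (adjoint (V l.1) ξ) m)
      (levelNormSq K V ξ (n + m)) := by
  have hcomposable : HasSum
      (fun p : {p : {l // K.deg l = n} × {l // K.deg l = m} // K.src p.1.1 = K.tgt p.2.1} =>
        ‖adjoint (V p.1.2.1) (adjoint (V p.1.1.1) ξ)‖ ^ 2) (levelNormSq K V ξ (n + m)) := by
    refine ((K.compEquiv n m).hasSum_iff.mpr (hV.hasSum_levelNormSq ξ (n + m))).congr_fun
      fun p => ?_
    rw [Function.comp_apply, K.coe_compEquiv_apply, hV.adjoint_apply_adjoint_apply p.2]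
  have hpairs : HasSum (fun p : {l // K.deg l = n} × {l // K.deg l = m} =>
      ‖adjoint (V p.2.1) (adjoint (V p.1.1) ξ)‖ ^ 2) (levelNormSq K V ξ (n + m)) := by
    refine (hasSum_subtype_iff_of_support_subset fun p hp => ?_).mp hcomposable
    by_contra h
    have hzero := hV.adjoint_apply_adjoint_apply_of_ne (show K.src p.1.1 ≠ K.tgt p.2.1 from h) ξ
    exact hp (by simp [hzero])
  exact hpairs.prod_fiberwise fun l => hV.hasSum_levelNormSq (adjoint (V l.1) ξ) m

end IsLambdaContraction

end Contraction

section Defect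

open Finset

variable {r : ℕ} {K : KGraph r} {H : Type u} [NormedAddCommGroup H] [InnerProductSpace ℂ H]
  [CompleteSpace H] {V : K.Λ → H →L[ℂ] H} {s : ℝ} {D : H →L[ℂ] H}

theorem IsDefectOperator.re_inner_apply_eq (hD : IsDefectOperator K V s D)
    (hV : IsLambdaContraction K V) (η : H) :
    RCLike.re ⟪η, D η⟫_ℂ = ∑ m ∈ Iic 1, (-(s ^ 2)) ^ (∑ i, m i) * levelNormSq K V η m := by
  classical
  let F : K.Λ → ℝ := fun μ => (-(s ^ 2)) ^ K.degSum μ * ‖adjoint (V μ) η‖ ^ 2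
  have hdefect : HasSum ({μ | K.deg μ ≤ 1}.indicator F) (RCLike.re ⟪η, D η⟫_ℂ) := by
    have h := ((hD η).mapL (innerSL ℂ η)).mapL Complex.reCLM
    refine hasSum_subtype_iff_indicator.mp (h.congr_fun fun μ => ?_)
    simp only [Function.comp_apply, Complex.reCLM_apply, coe_innerSL_apply, inner_smul_right,
      Complex.re_ofReal_mul, F]
    exact congrArg _ (re_inner_apply_adjoint_apply _ _).symm
  have hlevels : HasSum (fun μ => ∑ m ∈ Iic 1, {μ | K.deg μ = m}.indicator F μ)
      (∑ m ∈ Iic 1, (-(s ^ 2)) ^ (∑ i, m i) * levelNormSq K V η m) := by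
    refine hasSum_sum fun m _ => hasSum_subtype_iff_indicator.mp ?_
    refine ((hV.hasSum_levelNormSq η m).mul_left _).congr_fun fun μ => ?_
    simp only [Function.comp_apply, F, KGraph.degSum, μ.2]
  refine hdefect.unique (hlevels.congr_fun fun μ => ?_)
  simp only [Set.indicator_apply, Set.mem_ofPred_eq]
  rw [sum_ite_eq]
  simp

theorem IsDefectOperator.hasSum_norm_sq_apply_adjoint_apply (hD : IsDefectOperator K V s D)
    (hV : IsLambdaContraction K V) {Dsq : H →L[ℂ] H} (hDsq_adj : IsSelfAdjoint Dsq)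
    (hDsq : Dsq ∘L Dsq = D) (ξ : H) (n : Fin r → ℕ) :
    HasSum (fun l : {l // K.deg l = n} => ‖Dsq (adjoint (V l.1) ξ)‖ ^ 2)
      (∑ m ∈ Iic 1, (-(s ^ 2)) ^ (∑ i, m i) * levelNormSq K V ξ (n + m)) := by
  refine (hasSum_sum fun m _ => (hV.hasSum_levelNormSq_adjoint_apply ξ n m).mul_left
    ((-(s ^ 2)) ^ ∑ i, m i)).congr_fun fun l => ?_
  rw [apply_norm_sq_eq_inner_adjoint_right, hDsq_adj.adjoint_eq, hDsq, hD.re_inner_apply_eq hV]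

theorem IsDefectOperator.hasSum_pow_mul_norm_sq_apply_adjoint_apply
    (hD : IsDefectOperator K V s D) (hV : IsLambdaContraction K V) (hs : |s| < 1)
    {Dsq : H →L[ℂ] H} (hDsq_adj : IsSelfAdjoint Dsq) (hDsq : Dsq ∘L Dsq = D) (ξ : H) :
    HasSum (fun l => (s ^ 2) ^ K.degSum l * ‖Dsq (adjoint (V l) ξ)‖ ^ 2) (‖ξ‖ ^ 2) := by
  have hs₀ : 0 ≤ s ^ 2 := sq_nonneg s
  have hs₁ : s ^ 2 < 1 := (sq_lt_one_iff_abs_lt_one s).mpr hs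
  let G : (Fin r → ℕ) → ℝ := fun n => (s ^ 2) ^ (∑ i, n i) * levelNormSq K V ξ n
  have hG : Summable G :=
    ((summable_pow_sum hs₀ hs₁).mul_right (‖ξ‖ ^ 2)).of_nonneg_of_le
      (fun n => mul_nonneg (pow_nonneg hs₀ _) (levelNormSq_nonneg _ _))
      fun n => mul_le_mul_of_nonneg_left (hV.levelNormSq_le ξ n) (pow_nonneg hs₀ _)
  have hG₀ : G 0 = ‖ξ‖ ^ 2 := by simp [G, hV.levelNormSq_zero]
  refine hasSum_of_hasSum_fiberwise_of_nonneg (fun l => by positivity) K.deg (fun n => ?_)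
    (hG₀ ▸ hasSum_sum_Iic_one_neg_one_pow_mul hG)
  have hlevel := (hD.hasSum_norm_sq_apply_adjoint_apply hV hDsq_adj hDsq ξ n).mul_left
    ((s ^ 2) ^ ∑ i, n i)
  have hvalue : (s ^ 2) ^ (∑ i, n i) *
      ∑ m ∈ Iic 1, (-(s ^ 2)) ^ (∑ i, m i) * levelNormSq K V ξ (n + m) =
      ∑ m ∈ Iic 1, (-1) ^ (∑ i, m i) * G (n + m) := by
    rw [mul_sum]
    refine sum_congr rfl fun m _ => ?_
    simp only [G, Pi.add_apply, sum_add_distrib]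
    rw [neg_pow, pow_add]
    ring
  rw [hvalue] at hlevel
  exact hlevel.congr_fun fun l => by rw [KGraph.degSum, l.2]

end Defect

theorem poisson_kernel_isometry_general
    {r : ℕ} (K : KGraph r) {H : Type u}
    [NormedAddCommGroup H] [InnerProductSpace ℂ H] [CompleteSpace H]
    (V : K.Λ → H →L[ℂ] H) (hV : IsLambdaContraction K V)
    (s : ℝ) (hs : s ∈ Set.Ioo (0 : ℝ) 1)
    (D : H →L[ℂ] H) (hD : IsDefectOperator K V s D)
    (Dsq : H →L[ℂ] H) (hDsqPos : Dsq.IsPositive) (hDsq : Dsq ∘L Dsq = D) :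
    ∃ W : H →ₗᵢ[ℂ] lp (fun _ : K.Λ => H) 2,
      ∀ (ξ : H) (l : K.Λ),
        (W ξ : ∀ _ : K.Λ, H) l = ((s ^ K.degSum l : ℝ) : ℂ) • Dsq (adjoint (V l) ξ) := by
  let T (l : K.Λ) : H →L[ℂ] H := ((s ^ K.degSum l : ℝ) : ℂ) • Dsq ∘L adjoint (V l)
  have hs_abs : |s| < 1 := abs_lt.mpr ⟨by linarith [hs.1], hs.2⟩
  have hT (ξ : H) : HasSum (fun l => ‖T l ξ‖ ^ 2) (‖ξ‖ ^ 2) := by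
    refine (hD.hasSum_pow_mul_norm_sq_apply_adjoint_apply hV hs_abs hDsqPos.isSelfAdjoint hDsq
      ξ).congr_fun fun l => ?_
    rw [smul_apply, comp_apply, norm_smul, mul_pow, Complex.norm_real, Real.norm_eq_abs,
      abs_pow, pow_right_comm, sq_abs]
  exact ⟨lpIsometryOfHasSumNormSq (fun l => T l) hT, fun ξ l => rfl⟩

/-- If the defect operator `Δ_s(V)` of a `Λ`-contraction is positive,
then `W_s : H → ℓ²(Λ; H)`, `W_s(ξ) = (s^{|λ|} Δ_s(V)^{1/2} V_λ* ξ)_λ`, is a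
well-defined linear isometry. -/
theorem poisson_kernel_isometry
    {r : ℕ} (K : KGraph r) {H : Type u}
    [NormedAddCommGroup H] [InnerProductSpace ℂ H] [CompleteSpace H]
    (V : K.Λ → H →L[ℂ] H) (hV : IsLambdaContraction K V)
    (s : ℝ) (hs : s ∈ Set.Ioo (0 : ℝ) 1)
    (D : H →L[ℂ] H) (hD : IsDefectOperator K V s D) (hDpos : D.IsPositive)
    (Dsq : H →L[ℂ] H) (hDsqPos : Dsq.IsPositive) (hDsq : Dsq ∘L Dsq = D) :
    ∃ W : H →ₗᵢ[ℂ] lp (fun _ : K.Λ => H) 2,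
      ∀ (ξ : H) (l : K.Λ),
        (W ξ : ∀ _ : K.Λ, H) l = ((s ^ K.degSum l : ℝ) : ℂ) • Dsq (adjoint (V l) ξ) :=
  poisson_kernel_isometry_general K V hV s hs D hD Dsq hDsqPos hDsq
end
end

section
/- Let Λ be a finitely aligned rank-r graph and V a Λ-contraction on a complex Hilbert space H satisfying the Popescu condition. Suppose (K, ι, W) and (K', ι', W') are two minimal Toeplitz-Cuntz-Krieger dilations of V, i.e. ι : H → K and ι' : H → K' are linear isometries, W and W' are Toeplitz-Cuntz-Krieger Λ-families which are Λ-contractions on K and K' respectively, W_λ* ∘ ι = ι ∘ V_λ* and W'_λ* ∘ ι' = ι' ∘ V_λ* for all λ ∈ Λ, K is the closed linear span of {W_λ ι(ξ) : λ ∈ Λ, ξ ∈ H} and K' is the closed linear span of {W'_λ ι'(ξ) : λ ∈ Λ, ξ ∈ H}. Then there exists a unitary U : K → K' such that U ∘ ι = ι' and U ∘ W_λ = W'_λ ∘ U for every λ ∈ Λ. -/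
open scoped ComplexOrder
open ContinuousLinearMap

set_option synthInstance.maxHeartbeats 1000000
set_option maxHeartbeats 1000000

noncomputable section

universe u

/-!
The Gram matrix of the generating vectors `W_λ ι(ξ)` of a Toeplitz-Cuntz-Krieger dilation depends
only on `V`: by relation (v) and the dilation property,
`⟪W_μ ιξ, W_ν ιη⟫ = ⟪ιξ, W_μ* W_ν ιη⟫ = Σ_{μα = νβ ∈ MCE(μ, ν)} ⟪V_α* ξ, V_β* η⟫`.
Two families with the same Gram matrix and dense spans correspond under a unitary `U`. It
intertwines the `W`'s because it does so on generators (`W_λ W_μ` is `W_{λμ}` or `0`), and it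
maps `ι₁` to `ι₂` because `ιξ = Σ_{a ∈ Λ⁰} W_a ιξ`.
-/

open scoped InnerProductSpace

section GramMatrix

variable {𝕜 E F ι : Type*} [RCLike 𝕜]
  [NormedAddCommGroup E] [InnerProductSpace 𝕜 E] [NormedAddCommGroup F] [InnerProductSpace 𝕜 F]

theorem inner_linearCombination_eq_of_inner_eq {g₁ : ι → E} {g₂ : ι → F}
    (h : ∀ i j, ⟪g₁ i, g₁ j⟫_𝕜 = ⟪g₂ i, g₂ j⟫_𝕜) (c d : ι →₀ 𝕜) :
    ⟪Finsupp.linearCombination 𝕜 g₁ c, Finsupp.linearCombination 𝕜 g₁ d⟫_𝕜 =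
      ⟪Finsupp.linearCombination 𝕜 g₂ c, Finsupp.linearCombination 𝕜 g₂ d⟫_𝕜 := by
  simp only [Finsupp.linearCombination_apply, Finsupp.sum_inner, Finsupp.inner_sum,
    inner_smul_left, inner_smul_right, h]

theorem norm_linearCombination_eq_of_inner_eq {g₁ : ι → E} {g₂ : ι → F}
    (h : ∀ i j, ⟪g₁ i, g₁ j⟫_𝕜 = ⟪g₂ i, g₂ j⟫_𝕜) (c : ι →₀ 𝕜) :
    ‖Finsupp.linearCombination 𝕜 g₁ c‖ = ‖Finsupp.linearCombination 𝕜 g₂ c‖ := by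
  rw [@norm_eq_sqrt_re_inner 𝕜, @norm_eq_sqrt_re_inner 𝕜,
    inner_linearCombination_eq_of_inner_eq h]

theorem denseRange_linearCombination_iff {g : ι → E} :
    DenseRange (Finsupp.linearCombination 𝕜 g) ↔
      Dense (Submodule.span 𝕜 (Set.range g) : Set E) := by
  rw [DenseRange, ← LinearMap.coe_range, Finsupp.range_linearCombination]

theorem exists_linearIsometryEquiv_of_inner_eq [CompleteSpace E] [CompleteSpace F]
    {g₁ : ι → E} {g₂ : ι → F} (h : ∀ i j, ⟪g₁ i, g₁ j⟫_𝕜 = ⟪g₂ i, g₂ j⟫_𝕜)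
    (h₁ : Dense (Submodule.span 𝕜 (Set.range g₁) : Set E))
    (h₂ : Dense (Submodule.span 𝕜 (Set.range g₂) : Set F)) :
    ∃ U : E ≃ₗᵢ[𝕜] F, ∀ i, U (g₁ i) = g₂ i := by
  have hd₁ := denseRange_linearCombination_iff.2 h₁
  have hd₂ := denseRange_linearCombination_iff.2 h₂
  have hnorm := fun c => (norm_linearCombination_eq_of_inner_eq h c).symm
  refine ⟨(LinearEquiv.refl 𝕜 (ι →₀ 𝕜)).extendOfIsometry _ _ hd₁ hd₂ hnorm, fun i => ?_⟩
  simpa using LinearEquiv.extendOfIsometry_eq (LinearEquiv.refl 𝕜 (ι →₀ 𝕜)) _ _ hd₁ hd₂ hnorm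
    (Finsupp.single i 1)

end GramMatrix

section Dilation

variable {r : ℕ} {K : KGraph r} {H : Type*}
  {E : Type*} [NormedAddCommGroup E] [InnerProductSpace ℂ E] [CompleteSpace E]
  {F : Type*} [NormedAddCommGroup F] [InnerProductSpace ℂ F] [CompleteSpace F]

theorem hasSum_inner_dilation [NormedAddCommGroup H] [InnerProductSpace ℂ H] [CompleteSpace H]
    {V : K.Λ → H →L[ℂ] H} {W : K.Λ → E →L[ℂ] E} {ι : H →ₗᵢ[ℂ] E}
    (hW : IsTCKFamily K W) (hdil : ∀ l ξ, adjoint (W l) (ι ξ) = ι (adjoint (V l) ξ))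
    (μ ν : K.Λ) (ξ η : H) :
    HasSum (fun p : {p : K.Λ × K.Λ // K.MCEPair μ ν p} =>
        ⟪adjoint (V p.1.1) ξ, adjoint (V p.1.2) η⟫_ℂ)
      ⟪W μ (ι ξ), W ν (ι η)⟫_ℂ := by
  have hterm : ∀ α β, ⟪ι ξ, W α (adjoint (W β) (ι η))⟫_ℂ =
      ⟪adjoint (V α) ξ, adjoint (V β) η⟫_ℂ := fun α β => by
    rw [hdil, ← adjoint_inner_left, hdil, ι.inner_map_map]
  simpa only [innerSL_apply_apply, hterm, adjoint_inner_right] using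
    (hW.2.2.2.2.2.2 μ ν (ι η)).mapL (innerSL ℂ (ι ξ))

theorem map_apply_eq_apply_map_of_generators {W₁ : K.Λ → E →L[ℂ] E} {W₂ : K.Λ → F →L[ℂ] F}
    {ι₁ : H → E} {ι₂ : H → F} (h₁ : IsLambdaContraction K W₁) (h₂ : IsLambdaContraction K W₂)
    (hdense : Dense (Submodule.span ℂ {x : E | ∃ (l : K.Λ) (ξ : H), x = W₁ l (ι₁ ξ)} : Set E))
    (U : E →L[ℂ] F) (hU : ∀ l ξ, U (W₁ l (ι₁ ξ)) = W₂ l (ι₂ ξ)) (l : K.Λ) (x : E) :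
    U (W₁ l x) = W₂ l (U x) := by
  suffices U ∘L W₁ l = W₂ l ∘L U from DFunLike.congr_fun this x
  refine ContinuousLinearMap.ext_on hdense ?_
  rintro _ ⟨m, ξ, rfl⟩
  by_cases h : K.src l = K.tgt m
  · simp only [comp_apply, ← comp_apply (W₁ l), ← comp_apply (W₂ l), hU, h₁.2.1 l m h,
      h₂.2.1 l m h]
  · simp only [comp_apply, ← comp_apply (W₁ l), ← comp_apply (W₂ l), hU, h₁.1 l m h,
      h₂.1 l m h, zero_apply, map_zero]

theorem map_embedding_eq_of_generators {W₁ : K.Λ → E →L[ℂ] E} {W₂ : K.Λ → F →L[ℂ] F}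
    {ι₁ : H → E} {ι₂ : H → F} (h₁ : IsLambdaContraction K W₁) (h₂ : IsLambdaContraction K W₂)
    (U : E →L[ℂ] F) (hU : ∀ l ξ, U (W₁ l (ι₁ ξ)) = W₂ l (ι₂ ξ)) (ξ : H) :
    U (ι₁ ξ) = ι₂ ξ := by
  have hsum := (h₁.2.2.2.2 (ι₁ ξ)).mapL U
  simp only [hU] at hsum
  exact hsum.unique (h₂.2.2.2.2 (ι₂ ξ))

end Dilation

theorem minimal_TCK_dilation_unique_general
    {r : ℕ} (K : KGraph r)
    {H : Type u} [NormedAddCommGroup H] [InnerProductSpace ℂ H] [CompleteSpace H]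
    (V : K.Λ → H →L[ℂ] H)
    {K₁ : Type u} [NormedAddCommGroup K₁] [InnerProductSpace ℂ K₁] [CompleteSpace K₁]
    {K₂ : Type u} [NormedAddCommGroup K₂] [InnerProductSpace ℂ K₂] [CompleteSpace K₂]
    (ι₁ : H →ₗᵢ[ℂ] K₁) (W₁ : K.Λ → K₁ →L[ℂ] K₁)
    (ι₂ : H →ₗᵢ[ℂ] K₂) (W₂ : K.Λ → K₂ →L[ℂ] K₂)
    (h₁tck : IsTCKFamily K W₁) (h₁con : IsLambdaContraction K W₁)
    (h₁dil : ∀ (l : K.Λ) (ξ : H), adjoint (W₁ l) (ι₁ ξ) = ι₁ (adjoint (V l) ξ))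
    (h₁min : Dense ((Submodule.span ℂ {x : K₁ | ∃ (l : K.Λ) (ξ : H), x = W₁ l (ι₁ ξ)} :
      Submodule ℂ K₁) : Set K₁))
    (h₂tck : IsTCKFamily K W₂) (h₂con : IsLambdaContraction K W₂)
    (h₂dil : ∀ (l : K.Λ) (ξ : H), adjoint (W₂ l) (ι₂ ξ) = ι₂ (adjoint (V l) ξ))
    (h₂min : Dense ((Submodule.span ℂ {x : K₂ | ∃ (l : K.Λ) (ξ : H), x = W₂ l (ι₂ ξ)} :
      Submodule ℂ K₂) : Set K₂)) :
    ∃ U : K₁ ≃ₗᵢ[ℂ] K₂,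
      (∀ ξ : H, U (ι₁ ξ) = ι₂ ξ) ∧ ∀ (l : K.Λ) (x : K₁), U (W₁ l x) = W₂ l (U x) := by
  let g₁ : K.Λ × H → K₁ := fun i => W₁ i.1 (ι₁ i.2)
  let g₂ : K.Λ × H → K₂ := fun i => W₂ i.1 (ι₂ i.2)
  have hgram : ∀ i j, ⟪g₁ i, g₁ j⟫_ℂ = ⟪g₂ i, g₂ j⟫_ℂ := fun i j =>
    (hasSum_inner_dilation h₁tck h₁dil i.1 j.1 i.2 j.2).unique
      (hasSum_inner_dilation h₂tck h₂dil i.1 j.1 i.2 j.2)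
  have hrange₁ : Set.range g₁ = {x | ∃ l ξ, x = W₁ l (ι₁ ξ)} := by ext; simp [g₁, eq_comm]
  have hrange₂ : Set.range g₂ = {x | ∃ l ξ, x = W₂ l (ι₂ ξ)} := by ext; simp [g₂, eq_comm]
  obtain ⟨U, hU⟩ :=
    exists_linearIsometryEquiv_of_inner_eq hgram (hrange₁ ▸ h₁min) (hrange₂ ▸ h₂min)
  have hUgen : ∀ l ξ, (U : K₁ →L[ℂ] K₂) (W₁ l (ι₁ ξ)) = W₂ l (ι₂ ξ) := fun l ξ => hU (l, ξ)
  exact ⟨U, map_embedding_eq_of_generators h₁con h₂con _ hUgen,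
    map_apply_eq_apply_map_of_generators h₁con h₂con h₁min _ hUgen⟩

/-- Uniqueness up to unitary equivalence of the minimal
Toeplitz-Cuntz-Krieger dilation of a `Λ`-contraction satisfying the Popescu condition. -/
theorem minimal_TCK_dilation_unique
    {r : ℕ} (K : KGraph r) (hFA : K.FinitelyAligned)
    {H : Type u} [NormedAddCommGroup H] [InnerProductSpace ℂ H] [CompleteSpace H]
    (V : K.Λ → H →L[ℂ] H) (hV : IsLambdaContraction K V) (hP : PopescuCondition K V)
    {K₁ : Type u} [NormedAddCommGroup K₁] [InnerProductSpace ℂ K₁] [CompleteSpace K₁]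
    {K₂ : Type u} [NormedAddCommGroup K₂] [InnerProductSpace ℂ K₂] [CompleteSpace K₂]
    (ι₁ : H →ₗᵢ[ℂ] K₁) (W₁ : K.Λ → K₁ →L[ℂ] K₁)
    (ι₂ : H →ₗᵢ[ℂ] K₂) (W₂ : K.Λ → K₂ →L[ℂ] K₂)
    (h₁tck : IsTCKFamily K W₁) (h₁con : IsLambdaContraction K W₁)
    (h₁dil : ∀ (l : K.Λ) (ξ : H), adjoint (W₁ l) (ι₁ ξ) = ι₁ (adjoint (V l) ξ))
    (h₁min : Dense ((Submodule.span ℂ {x : K₁ | ∃ (l : K.Λ) (ξ : H), x = W₁ l (ι₁ ξ)} :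
      Submodule ℂ K₁) : Set K₁))
    (h₂tck : IsTCKFamily K W₂) (h₂con : IsLambdaContraction K W₂)
    (h₂dil : ∀ (l : K.Λ) (ξ : H), adjoint (W₂ l) (ι₂ ξ) = ι₂ (adjoint (V l) ξ))
    (h₂min : Dense ((Submodule.span ℂ {x : K₂ | ∃ (l : K.Λ) (ξ : H), x = W₂ l (ι₂ ξ)} :
      Submodule ℂ K₂) : Set K₂)) :
    ∃ U : K₁ ≃ₗᵢ[ℂ] K₂,
      (∀ ξ : H, U (ι₁ ξ) = ι₂ ξ) ∧ ∀ (l : K.Λ) (x : K₁), U (W₁ l x) = W₂ l (U x) :=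
  minimal_TCK_dilation_unique_general K V ι₁ W₁ ι₂ W₂ h₁tck h₁con h₁dil h₁min h₂tck h₂con h₂dil
    h₂min
end
end

section
/- Let Λ be a cofinal rank-r graph and V a Λ-contraction on a complex Hilbert space H. Let X ∈ B(H) and suppose that for every j ∈ {1,…,r} and every ξ ∈ H the family (V_λ X V_λ* ξ)_{λ∈Λ^{e_j}} is summable with sum X ξ. Then for every n ∈ ℕ^r and every ξ ∈ H the family (V_λ X V_λ* ξ)_{λ∈Λ^n} is summable with sum X ξ; in particular Σ_{a∈Λ⁰} V_a X V_a = X strongly. -/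
open scoped ComplexOrder
open ContinuousLinearMap

set_option synthInstance.maxHeartbeats 1000000
set_option maxHeartbeats 1000000

noncomputable section

universe u

/-! For a `Λ`-contraction each family `(V_λ)_{λ ∈ Λ^n}` is a row contraction, so
`∑_{λ ∈ Λ^n} V_λ X V_λ^* ξ` converges for every bounded `X`. Unique factorisation identifies
`Λ^{m+n}` with the composable pairs in `Λ^m × Λ^n`, and `V_μ V_ν` is `V_{μν}` or `0`; summing the
resulting double series fibrewise over `μ` shows that if `X` is fixed by `σ_V(n)`, then
`σ_V(m + n)(X) = σ_V(m)(X)`. So the degrees fixing `X` are closed under addition. Taking `m = 0`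
and `n = e_j` gives `σ_V(0)(X) = X` (in rank `0` cofinality forces `Λ⁰ = ∅`, hence `H = 0`), and
then the generators `e_j` give all of `ℕ^r`. -/

open scoped InnerProductSpace

section RowContraction

variable {𝕜 E F ι : Type*} [RCLike 𝕜]
  [NormedAddCommGroup E] [InnerProductSpace 𝕜 E] [CompleteSpace E]
  [NormedAddCommGroup F] [InnerProductSpace 𝕜 F] [CompleteSpace F]

/-- Equivalently, `∑_{i ∈ s} W_i W_i^* ≤ 1` for every finite `s`. -/
def IsRowContraction (W : ι → E →L[𝕜] F) : Prop :=
  ∀ (s : Finset ι) (ζ : F), ∑ i ∈ s, ‖adjoint (W i) ζ‖ ^ 2 ≤ ‖ζ‖ ^ 2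

variable {W : ι → E →L[𝕜] F}

theorem IsRowContraction.norm_sum_apply_sq_le (hW : IsRowContraction W) (s : Finset ι)
    (η : ι → E) : ‖∑ i ∈ s, W i (η i)‖ ^ 2 ≤ ∑ i ∈ s, ‖η i‖ ^ 2 := by
  set x := ∑ i ∈ s, W i (η i)
  have hx : ‖x‖ ^ 2 ≤ ∑ i ∈ s, ‖η i‖ * ‖adjoint (W i) x‖ :=
    calc ‖x‖ ^ 2 = RCLike.re ⟪x, x⟫_𝕜 := (inner_self_eq_norm_sq x).symm
      _ = ∑ i ∈ s, RCLike.re ⟪η i, adjoint (W i) x⟫_𝕜 := by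
          simp_rw [adjoint_inner_right]
          rw [← map_sum, ← sum_inner]
      _ ≤ ∑ i ∈ s, ‖η i‖ * ‖adjoint (W i) x‖ :=
          Finset.sum_le_sum fun i _ => (RCLike.re_le_norm _).trans (norm_inner_le_norm _ _)
  have hsq : (‖x‖ ^ 2) ^ 2 ≤ (∑ i ∈ s, ‖η i‖ ^ 2) * ‖x‖ ^ 2 :=
    calc (‖x‖ ^ 2) ^ 2 ≤ (∑ i ∈ s, ‖η i‖ * ‖adjoint (W i) x‖) ^ 2 :=
          pow_le_pow_left₀ (by positivity) hx 2
      _ ≤ (∑ i ∈ s, ‖η i‖ ^ 2) * ∑ i ∈ s, ‖adjoint (W i) x‖ ^ 2 :=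
          Finset.sum_mul_sq_le_sq_mul_sq _ _ _
      _ ≤ (∑ i ∈ s, ‖η i‖ ^ 2) * ‖x‖ ^ 2 :=
          mul_le_mul_of_nonneg_left (hW s x) (by positivity)
  rcases (sq_nonneg ‖x‖).eq_or_lt with h0 | hpos
  · rw [← h0]; positivity
  · nlinarith

theorem IsRowContraction.summable_apply (hW : IsRowContraction W) {η : ι → E}
    (hη : Summable fun i => ‖η i‖ ^ 2) : Summable fun i => W i (η i) := by
  rw [summable_iff_vanishing_norm]
  intro ε hε
  obtain ⟨s, hs⟩ := summable_iff_vanishing_norm.1 hη (ε ^ 2) (by positivity)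
  refine ⟨s, fun t ht => ?_⟩
  have h := hs t ht
  rw [Real.norm_of_nonneg (by positivity)] at h
  exact (pow_lt_pow_iff_left₀ (norm_nonneg _) hε.le two_ne_zero).1
    ((hW.norm_sum_apply_sq_le t η).trans_lt h)

theorem IsRowContraction.summable_norm_adjoint_sq (hW : IsRowContraction W) (ζ : F) :
    Summable fun i => ‖adjoint (W i) ζ‖ ^ 2 :=
  summable_of_sum_le (fun _ => sq_nonneg _) fun s => hW s ζ

theorem IsRowContraction.summable_conj (hW : IsRowContraction W) (X : E →L[𝕜] E) (ζ : F) :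
    Summable fun i => W i (X (adjoint (W i) ζ)) := by
  refine hW.summable_apply (((hW.summable_norm_adjoint_sq ζ).mul_left (‖X‖ ^ 2)).of_nonneg_of_le
    (fun _ => sq_nonneg _) fun i => ?_)
  rw [← mul_pow]
  exact pow_le_pow_left₀ (norm_nonneg _) (X.le_opNorm _) 2

end RowContraction

namespace KGraph

variable {r : ℕ} (K : KGraph r)

abbrev OfDegree (n : Fin r → ℕ) : Type := {l : K.Λ // K.deg l = n}

variable {K} {n₁ n₂ n : Fin r → ℕ}

def compOfDegree (h : n₁ + n₂ = n)
    (q : {q : K.OfDegree n₁ × K.OfDegree n₂ // K.src q.1 = K.tgt q.2}) : K.OfDegree n :=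
  ⟨K.comp q.1.1 q.1.2, by rw [K.deg_comp _ _ q.2, q.1.1.2, q.1.2.2, h]⟩

theorem compOfDegree_bijective (h : n₁ + n₂ = n) :
    Function.Bijective (compOfDegree (K := K) h) := by
  constructor
  · rintro ⟨⟨μ, ν⟩, hμν⟩ ⟨⟨μ', ν'⟩, hμν'⟩ he
    obtain ⟨_, _, huniq⟩ := K.factorisation _ n₁ n₂ (by rw [K.deg_comp _ _ hμν, μ.2, ν.2])
    have hpair : (μ.1, ν.1) = (μ'.1, ν'.1) :=
      (huniq (μ.1, ν.1) ⟨μ.2, ν.2, hμν, rfl⟩).trans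
        (huniq (μ'.1, ν'.1) ⟨μ'.2, ν'.2, hμν', (congrArg Subtype.val he).symm⟩).symm
    simp only [Prod.mk.injEq] at hpair
    ext
    · exact hpair.1
    · exact hpair.2
  · rintro ⟨l, hl⟩
    obtain ⟨⟨μ, ν⟩, ⟨hμ, hν, hμν, rfl⟩, -⟩ := K.factorisation l n₁ n₂ (hl.trans h.symm)
    exact ⟨⟨(⟨μ, hμ⟩, ⟨ν, hν⟩), hμν⟩, rfl⟩

open Classical in
theorem hasSum_comp_pairs_iff {E : Type*} [AddCommMonoid E] [TopologicalSpace E]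
    (h : n₁ + n₂ = n) (g : K.Λ → E) {c : E} :
    HasSum (fun q : K.OfDegree n₁ × K.OfDegree n₂ =>
      if K.src q.1 = K.tgt q.2 then g (K.comp q.1 q.2) else 0) c ↔
      HasSum (fun l : K.OfDegree n => g l) c := by
  rw [← (Equiv.ofBijective _ (compOfDegree_bijective h)).hasSum_iff,
    ← hasSum_subtype_iff_of_support_subset (s := {q | K.src q.1 = K.tgt q.2})]
  · exact Iff.of_eq (congrArg (HasSum · c) (funext fun q => if_pos q.2))
  · intro q hq
    by_contra hne
    exact hq (if_neg hne)

theorem Cofinal.isEmpty_vertex [IsEmpty (Fin r)] (hcof : K.Cofinal) :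
    IsEmpty {a : K.Λ // K.IsVertex a} :=
  ⟨fun ⟨a, ha⟩ => let ⟨_, hl, _⟩ := hcof a ha; hl (Subsingleton.elim _ _)⟩

end KGraph

section LambdaContraction

variable {r : ℕ} {K : KGraph r}
variable {H : Type u} [NormedAddCommGroup H] [InnerProductSpace ℂ H] [CompleteSpace H]

/-- `X` is a fixed point of `σ_V(n) : X ↦ ∑_{λ ∈ Λ^n} V_λ X V_λ^*`, the sum converging strongly. -/
def IsSigmaFixed (V : K.Λ → H →L[ℂ] H) (n : Fin r → ℕ) (X : H →L[ℂ] H) : Prop :=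
  ∀ ξ : H, HasSum (fun l : K.OfDegree n => V l (X (adjoint (V l) ξ))) (X ξ)

variable {V : K.Λ → H →L[ℂ] H}

namespace IsLambdaContraction

variable (hV : IsLambdaContraction K V)
include hV

theorem isRowContraction (n : Fin r → ℕ) : IsRowContraction fun l : K.OfDegree n => V l := by
  intro s ζ
  have hpos := (hV.2.2.1 n (s.map (Function.Embedding.subtype _)) fun l hl => by
    obtain ⟨l, -, rfl⟩ := Finset.mem_map.1 hl
    exact l.2).re_inner_nonneg_left ζ
  have hterm : ∀ l : K.Λ, RCLike.re ⟪V l (adjoint (V l) ζ), ζ⟫_ℂ = ‖adjoint (V l) ζ‖ ^ 2 :=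
    fun l => by rw [← adjoint_inner_right, inner_self_eq_norm_sq]
  simp only [sub_apply, one_apply_eq_self, sum_apply, comp_apply, inner_sub_left, sum_inner,
    map_sub, map_sum, Finset.sum_map, Function.Embedding.coe_subtype, hterm] at hpos
  rw [inner_self_eq_norm_sq] at hpos
  linarith

open Classical in
theorem apply_apply_conj_adjoint_adjoint (X : H →L[ℂ] H) (μ ν : K.Λ) (ξ : H) :
    V μ (V ν (X (adjoint (V ν) (adjoint (V μ) ξ)))) =
      if K.src μ = K.tgt ν then V (K.comp μ ν) (X (adjoint (V (K.comp μ ν)) ξ)) else 0 := by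
  split_ifs with h
  · rw [← hV.2.1 μ ν h, adjoint_comp]
    rfl
  · rw [← comp_apply, hV.1 μ ν h, zero_apply]

theorem hasSum_conj_iff_of_add {X : H →L[ℂ] H} {n₁ n₂ n : Fin r → ℕ} (h : n₁ + n₂ = n)
    (hX : IsSigmaFixed V n₂ X) (ξ : H) {c : H} :
    HasSum (fun l : K.OfDegree n => V l (X (adjoint (V l) ξ))) c ↔
      HasSum (fun l : K.OfDegree n₁ => V l (X (adjoint (V l) ξ))) c := by
  have hf : ∀ c, HasSum (fun q : K.OfDegree n₁ × K.OfDegree n₂ =>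
      V q.1 (V q.2 (X (adjoint (V q.2) (adjoint (V q.1) ξ))))) c ↔
      HasSum (fun l : K.OfDegree n => V l (X (adjoint (V l) ξ))) c := fun c => by
    simp only [hV.apply_apply_conj_adjoint_adjoint]
    exact KGraph.hasSum_comp_pairs_iff h fun l => V l (X (adjoint (V l) ξ))
  obtain ⟨s, hs⟩ := ((hf _).2 ((hV.isRowContraction n).summable_conj X ξ).hasSum).summable
  have houter : HasSum (fun l : K.OfDegree n₁ => V l (X (adjoint (V l) ξ))) s :=
    hs.prod_fiberwise fun μ => (V μ).hasSum (hX (adjoint (V μ) ξ))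
  rw [← hf]
  exact ⟨fun hc => hs.unique hc ▸ houter, fun hc => houter.unique hc ▸ hs⟩

theorem isSigmaFixed_iff_of_add {X : H →L[ℂ] H} {n₁ n₂ n : Fin r → ℕ} (h : n₁ + n₂ = n)
    (hX : IsSigmaFixed V n₂ X) :
    IsSigmaFixed V n X ↔ IsSigmaFixed V n₁ X :=
  forall_congr' fun ξ => hV.hasSum_conj_iff_of_add h hX ξ

theorem isSigmaFixed_of_generators {X : H →L[ℂ] H} (h0 : IsSigmaFixed V 0 X)
    (hX : ∀ j, IsSigmaFixed V (Pi.single j 1) X) (n : Fin r → ℕ) : IsSigmaFixed V n X := by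
  have hadd : ∀ m₁ m₂, IsSigmaFixed V m₁ X → IsSigmaFixed V m₂ X →
      IsSigmaFixed V (m₁ + m₂) X :=
    fun _ _ h₁ h₂ => (hV.isSigmaFixed_iff_of_add rfl h₂).2 h₁
  refine Pi.single_induction _ n h0 hadd fun j m => ?_
  induction m with
  | zero => simpa using h0
  | succ m ih =>
    rw [Pi.single_add]
    exact hadd _ _ ih (hX j)

theorem subsingleton [IsEmpty {a : K.Λ // K.IsVertex a}] : Subsingleton H :=
  ⟨fun ξ η => ((hV.2.2.2.2 ξ).unique hasSum_empty).trans
    ((hV.2.2.2.2 η).unique hasSum_empty).symm⟩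

theorem adjoint_vertex {a : K.Λ} (ha : K.IsVertex a) : adjoint (V a) = V a :=
  (hV.2.2.2.1 a ha).1.adjoint_eq

end IsLambdaContraction

end LambdaContraction

/-- If `X` is fixed by `σ_V(e_j)` for every `j`, then it is fixed by
`σ_V(n)` for all `n ∈ ℕ^r`, and `Σ_{a∈Λ⁰} V_a X V_a = X` strongly. -/
theorem fixed_points_of_generators
    {r : ℕ} (K : KGraph r) (hcof : K.Cofinal)
    {H : Type u} [NormedAddCommGroup H] [InnerProductSpace ℂ H] [CompleteSpace H]
    (V : K.Λ → H →L[ℂ] H) (hV : IsLambdaContraction K V)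
    (X : H →L[ℂ] H)
    (hX : ∀ j : Fin r, ∀ ξ : H,
      HasSum (fun l : {l : K.Λ // K.deg l = Pi.single j 1} =>
        V l.1 (X (adjoint (V l.1) ξ))) (X ξ)) :
    (∀ (n : Fin r → ℕ) (ξ : H),
      HasSum (fun l : {l : K.Λ // K.deg l = n} => V l.1 (X (adjoint (V l.1) ξ))) (X ξ)) ∧
    (∀ ξ : H,
      HasSum (fun a : {a : K.Λ // K.IsVertex a} => V a.1 (X (V a.1 ξ))) (X ξ)) := by
  have hzero : IsSigmaFixed V 0 X := by
    rcases isEmpty_or_nonempty (Fin r) with hr | ⟨⟨j⟩⟩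
    · have := hcof.isEmpty_vertex
      have := hV.subsingleton
      exact fun ξ => by simp only [Subsingleton.elim _ (0 : H), hasSum_zero]
    · exact (hV.isSigmaFixed_iff_of_add (zero_add _) (hX j)).1 (hX j)
  have hall := hV.isSigmaFixed_of_generators hzero hX
  refine ⟨hall, fun ξ => ?_⟩
  have hvertex : ∀ a : K.OfDegree 0, adjoint (V a) = V a := fun a => hV.adjoint_vertex a.2
  have h := hall 0 ξ
  simp only [hvertex] at h
  exact h
end
end

section
/- Let Λ be a finite rank-r graph with no sources and let W be a Cuntz-Pimsner Λ-family on a complex Hilbert space K satisfying Σ_{a∈Λ⁰} W_a = I. Then for X ∈ B(K) the following are equivalent: (a) Σ_{λ∈Λ^n} W_λ X W_λ* = X for every n ∈ ℕ^r; (b) X W_λ = W_λ X and X W_λ* = W_λ* X for every λ ∈ Λ. That is, Fix σ_W equals the commutant of {W_λ, W_λ* : λ ∈ Λ}. -/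
open scoped ComplexOrder
open ContinuousLinearMap

set_option synthInstance.maxHeartbeats 1000000
set_option maxHeartbeats 1000000

noncomputable section

universe u

/-- For a Cuntz-Pimsner `Λ`-family `W` with `Σ_a W_a = I` on a finite
graph with no sources, the fixed point space of `σ_W` coincides with the commutant of
`{W_λ, W_λ* : λ ∈ Λ}`. -/
theorem fix_eq_commutant
    {r : ℕ} (K : KGraph r) (hfin : K.FiniteGraph) (hns : K.NoSources)
    {H : Type u} [NormedAddCommGroup H] [InnerProductSpace ℂ H] [CompleteSpace H]
    (W : K.Λ → H →L[ℂ] H) (hW : IsCPFamily K W)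
    (hunit : ∀ ξ : H, HasSum (fun a : {a : K.Λ // K.IsVertex a} => W a.1 ξ) ξ)
    (X : H →L[ℂ] H) :
    (∀ (n : Fin r → ℕ) (ξ : H),
        HasSum (fun l : {l : K.Λ // K.deg l = n} => W l.1 (X (adjoint (W l.1) ξ))) (X ξ))
      ↔
    (∀ l : K.Λ, X ∘L W l = W l ∘L X ∧ X ∘L adjoint (W l) = adjoint (W l) ∘L X) := by
  obtain ⟨⟨h1, h2, h3, h4, h5, h6, h7⟩, hCP⟩ := hW
  -- orthogonality for same-degree morphisms
  have horth : ∀ l m : K.Λ, K.deg l = K.deg m → l ≠ m →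
      adjoint (W l) ∘L W m = 0 := by
    intro l m hdeg hne
    have hempty : IsEmpty {p : K.Λ × K.Λ // K.MCEPair l m p} := by
      constructor
      rintro ⟨⟨α, β⟩, hp1, hp2, hp3, hp4⟩
      apply hne
      have hsup : K.deg l ⊔ K.deg m = K.deg l := by rw [hdeg, sup_idem]
      rw [K.deg_comp l α hp1, hsup] at hp4
      have hda : K.deg α = 0 := add_eq_left.mp hp4
      have hdb : K.deg β = 0 := by
        have h' : K.deg (K.comp m β) = K.deg l := by rw [← hp3, K.deg_comp l α hp1, hp4]
        rw [K.deg_comp m β hp2, ← hdeg] at h'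
        exact add_eq_left.mp h'
      have hα : α = K.src l := by rw [← K.tgt_eq_self α hda, ← hp1]
      have hβ : β = K.src m := by rw [← K.tgt_eq_self β hdb, ← hp2]
      have : l = m := by
        rw [hα] at hp3; rw [hβ] at hp3
        rwa [K.comp_src_self l, K.comp_src_self m] at hp3
      exact this
    ext ξ
    have h0 : HasSum
        (fun p : {p : K.Λ × K.Λ // K.MCEPair l m p} => W p.1.1 (adjoint (W p.1.2) ξ)) 0 := by
      haveI := hempty
      exact hasSum_empty
    have := (h7 l m ξ).unique h0
    simpa using this
  -- key sum: ∑_{λ ∈ Λ^n} W_λ W_λ* ξ = ξ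
  have hfull : ∀ (n : Fin r → ℕ) (ξ : H),
      HasSum (fun l : {l : K.Λ // K.deg l = n} => W l.1 (adjoint (W l.1) ξ)) ξ := by
    intro n ξ
    by_cases hn : n = 0
    · subst hn
      have hfun : (fun l : {l : K.Λ // K.deg l = 0} => W l.1 (adjoint (W l.1) ξ))
          = fun l => W l.1 ξ := by
        funext l
        have hv : K.IsVertex l.1 := l.2
        obtain ⟨hsa, hid⟩ := h2 l.1 hv
        rw [hsa.adjoint_eq]
        have := congrArg (fun T => T ξ) hid
        simpa using this
      rw [hfun]
      exact hunit ξ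
    · haveI instV : Fintype {a : K.Λ // K.IsVertex a} := (hfin 0).fintype
      haveI instN : Fintype {l : K.Λ // K.deg l = n} := (hfin n).fintype
      haveI instF : ∀ a : K.Λ, Fintype {l : K.Λ // K.deg l = n ∧ K.tgt l = a} := fun a =>
        ((hfin n).subset (fun l hl => hl.1)).fintype
      have hsum_a : ∑ a : {a : K.Λ // K.IsVertex a}, W a.1 ξ = ξ :=
        (hasSum_fintype _).unique (hunit ξ)
      have hsum_la : ∀ a : {a : K.Λ // K.IsVertex a},
          ∑ l : {l : K.Λ // K.deg l = n ∧ K.tgt l = a.1}, W l.1 (adjoint (W l.1) ξ)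
            = W a.1 ξ := fun a =>
        (hasSum_fintype _).unique (hCP n hn a.1 a.2 ξ)
      let e : (Σ a : {a : K.Λ // K.IsVertex a}, {l : K.Λ // K.deg l = n ∧ K.tgt l = a.1})
          ≃ {l : K.Λ // K.deg l = n} :=
        { toFun := fun p => ⟨p.2.1, p.2.2.1⟩
          invFun := fun l => ⟨⟨K.tgt l.1, K.deg_tgt l.1⟩, ⟨l.1, ⟨l.2, rfl⟩⟩⟩
          left_inv := by
            rintro ⟨⟨a, ha⟩, l⟩
            have hla : K.tgt l.1 = a := l.2.2
            refine Sigma.ext (Subtype.ext hla) ?_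
            refine (Subtype.heq_iff_coe_eq ?_).mpr rfl
            intro x
            simp [hla]
          right_inv := by rintro ⟨l, hl⟩; rfl }
      have htot : ∑ l : {l : K.Λ // K.deg l = n}, W l.1 (adjoint (W l.1) ξ) = ξ := by
        rw [← Equiv.sum_comp e (fun l : {l : K.Λ // K.deg l = n} => W l.1 (adjoint (W l.1) ξ)),
          ← Finset.univ_sigma_univ, Finset.sum_sigma]
        calc ∑ a : {a : K.Λ // K.IsVertex a},
              ∑ l : {l : K.Λ // K.deg l = n ∧ K.tgt l = a.1}, W l.1 (adjoint (W l.1) ξ)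
            = ∑ a : {a : K.Λ // K.IsVertex a}, W a.1 ξ := by
              exact Finset.sum_congr rfl fun a _ => hsum_la a
          _ = ξ := hsum_a
      have hh := hasSum_fintype
        (fun l : {l : K.Λ // K.deg l = n} => W l.1 (adjoint (W l.1) ξ))
      rwa [htot] at hh
  constructor
  · -- fixed point ⇒ commutant
    intro hfix μ
    -- Eq1
    have hEq1 : ∀ (μ : K.Λ) (ξ : H), X (W μ ξ) = W μ (X (W (K.src μ) ξ)) := by
      intro μ ξ
      set f : {l : K.Λ // K.deg l = K.deg μ} → H :=
        fun l => W l.1 (X (adjoint (W l.1) (W μ ξ))) with hf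
      have hb : HasSum f (f ⟨μ, rfl⟩) := by
        apply hasSum_single
        intro l hl
        have hne : l.1 ≠ μ := fun h => hl (Subtype.ext h)
        have h0 : adjoint (W l.1) ∘L W μ = 0 := horth _ _ l.2 hne
        have : adjoint (W l.1) (W μ ξ) = 0 := by
          rw [← ContinuousLinearMap.comp_apply, h0]; rfl
        simp [hf, this]
      have huniq := (hfix (K.deg μ) (W μ ξ)).unique hb
      have hsrc : adjoint (W μ) (W μ ξ) = W (K.src μ) ξ := by
        rw [← ContinuousLinearMap.comp_apply, h5 μ]
      rw [huniq]
      simp only [hf]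
      rw [hsrc]
    -- Eq2
    have hEq2 : ∀ (μ : K.Λ) (ξ : H),
        adjoint (W μ) (X ξ) = W (K.src μ) (X (adjoint (W μ) ξ)) := by
      intro μ ξ
      set f : {l : K.Λ // K.deg l = K.deg μ} → H :=
        fun l => adjoint (W μ) (W l.1 (X (adjoint (W l.1) ξ))) with hf
      have hb : HasSum f (f ⟨μ, rfl⟩) := by
        apply hasSum_single
        intro l hl
        have hne : μ ≠ l.1 := fun h => hl (Subtype.ext h.symm)
        have h0 : adjoint (W μ) ∘L W l.1 = 0 := horth _ _ l.2.symm hne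
        have : adjoint (W μ) (W l.1 (X (adjoint (W l.1) ξ))) = 0 := by
          rw [← ContinuousLinearMap.comp_apply, h0]; rfl
        simp [hf, this]
      have hsum := (adjoint (W μ)).hasSum (hfix (K.deg μ) ξ)
      have huniq := hsum.unique hb
      have hsrc : ∀ η, adjoint (W μ) (W μ η) = W (K.src μ) η := by
        intro η; rw [← ContinuousLinearMap.comp_apply, h5 μ]
      rw [huniq]
      simp only [hf]
      rw [hsrc]
    -- vertex commutation
    have hvert : ∀ a : K.Λ, K.IsVertex a → X ∘L W a = W a ∘L X := by
      intro a ha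
      obtain ⟨hsa, hid⟩ := h2 a ha
      ext ξ
      have h1' : X (W a ξ) = W a (X (W a ξ)) := by
        have := hEq1 a ξ
        rwa [K.src_eq_self a ha] at this
      have h2' : W a (X ξ) = W a (X (W a ξ)) := by
        have := hEq2 a ξ
        rwa [hsa.adjoint_eq, K.src_eq_self a ha] at this
      simp only [ContinuousLinearMap.comp_apply]
      rw [h1', h2']
    have hsv : K.IsVertex (K.src μ) := K.deg_src μ
    have hts : K.src μ = K.tgt (K.src μ) := (K.tgt_eq_self _ (K.deg_src μ)).symm
    have hWcomp : W μ ∘L W (K.src μ) = W μ := by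
      rw [h4 μ (K.src μ) hts, K.comp_src_self]
    constructor
    · ext ξ
      simp only [ContinuousLinearMap.comp_apply]
      rw [hEq1 μ ξ]
      have : X (W (K.src μ) ξ) = W (K.src μ) (X ξ) := by
        have := congrArg (fun T => T ξ) (hvert (K.src μ) hsv)
        simpa using this
      rw [this, ← ContinuousLinearMap.comp_apply (W μ) (W (K.src μ)), hWcomp]
    · ext ξ
      simp only [ContinuousLinearMap.comp_apply]
      have hadj : W (K.src μ) ∘L adjoint (W μ) = adjoint (W μ) := by
        have := congrArg ContinuousLinearMap.adjoint hWcomp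
        rwa [adjoint_comp, (h2 _ hsv).1.adjoint_eq] at this
      rw [hEq2 μ ξ]
      have : W (K.src μ) (X (adjoint (W μ) ξ)) = X (W (K.src μ) (adjoint (W μ) ξ)) := by
        have := congrArg (fun T => T (adjoint (W μ) ξ)) (hvert (K.src μ) hsv)
        simpa using this.symm
      rw [this, ← ContinuousLinearMap.comp_apply (W (K.src μ)) (adjoint (W μ)), hadj]
  · -- commutant ⇒ fixed point
    intro hcomm n ξ
    have hfun : (fun l : {l : K.Λ // K.deg l = n} => W l.1 (X (adjoint (W l.1) ξ)))
        = fun l => X (W l.1 (adjoint (W l.1) ξ)) := by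
      funext l
      have := congrArg (fun T => T (adjoint (W l.1) ξ)) (hcomm l.1).1
      simpa using this.symm
    rw [hfun]
    exact X.hasSum (hfull n ξ)
end
end

section
/- Let A be a unital C*-algebra, H and K complex Hilbert spaces, π : A → B(K) a unital *-homomorphism, and V : H → K a linear isometry such that the linear span of {π(a) V ξ : a ∈ A, ξ ∈ H} is dense in K. Let Φ, Ψ : A → B(H) be completely positive maps with Φ(a) = V* π(a) V for all a ∈ A, and suppose Φ − Ψ is completely positive. Then there exists a unique operator X ∈ B(K) commuting with π(a) for every a ∈ A such that Ψ(a) = V* X π(a) V for all a ∈ A; moreover 0 ≤ X ≤ I. -/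
open scoped ComplexOrder
open ContinuousLinearMap

set_option synthInstance.maxHeartbeats 1000000
set_option maxHeartbeats 1000000

noncomputable section

universe u

/-- A map from a C*-algebra into `B(H)` is completely positive: it sends every positive
`k × k` matrix over `A` (equivalently, every matrix of the form `b* b`) to a positive
operator matrix on `H^k`. -/
def IsCompletelyPositiveMap {A : Type u} [NonUnitalNormedRing A] [StarRing A]
    {H : Type u} [NormedAddCommGroup H] [InnerProductSpace ℂ H]
    (Θ : A → (H →L[ℂ] H)) : Prop :=
  ∀ (k : ℕ) (b : Matrix (Fin k) (Fin k) A) (v : Fin k → H),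
    0 ≤ ∑ i, ∑ j, (inner ℂ (v i) (Θ ((b.conjTranspose * b) i j) (v j)) : ℂ)

/-!
Arveson's Radon–Nikodym argument. The form `⟪∑ π(aᵢ) V ξᵢ, ∑ π(bⱼ) V ηⱼ⟫_Ψ = ∑ ⟪ξᵢ, Ψ(aᵢ* bⱼ) ηⱼ⟫`
is defined on formal sums `A →₀ H`. Complete positivity of `Ψ` and of `Φ - Ψ`, together with
`Φ = V* π V`, squeezes its quadratic form between `0` and `‖∑ π(aᵢ) V ξᵢ‖²`; by Cauchy–Schwarz the
form is then bounded by the norms in `K`, so it depends only on the vectors `∑ π(aᵢ) V ξᵢ` and,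
these being dense, it is `⟪x, X y⟫` for an operator `0 ≤ X ≤ 1`. The identity
`⟪π(a) V ξ, X π(b) V η⟫ = ⟪ξ, Ψ(a* b) η⟫` on generators gives commutation with `π(A)`, the formula
for `Ψ`, and uniqueness.
-/

open scoped InnerProductSpace ComplexConjugate

namespace LinearMap

variable {F : Type*} [AddCommGroup F] [Module ℂ F]

theorem apply_flip_eq_conj_of_nonneg (S : F →ₗ⋆[ℂ] F →ₗ[ℂ] ℂ) (hS : ∀ f, 0 ≤ S f f)
    (f g : F) : S g f = conj (S f g) := by
  have h₁ := (Complex.nonneg_iff.mp (hS (f + g))).2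
  have h₂ := (Complex.nonneg_iff.mp (hS (f + Complex.I • g))).2
  have hf := (Complex.nonneg_iff.mp (hS f)).2
  have hg := (Complex.nonneg_iff.mp (hS g)).2
  simp only [map_add, map_smulₛₗ, add_apply, smul_apply, smul_eq_mul, RingHom.id_apply,
    Complex.add_im, Complex.add_re, Complex.mul_im, Complex.mul_re, Complex.conj_re,
    Complex.conj_im, Complex.I_re, Complex.I_im] at h₁ h₂
  apply Complex.ext <;> simp <;> linarith

theorem norm_apply_sq_le_of_nonneg (S : F →ₗ⋆[ℂ] F →ₗ[ℂ] ℂ) (hS : ∀ f, 0 ≤ S f f)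
    (f g : F) : ‖S f g‖ ^ 2 ≤ (S f f).re * (S g g).re := by
  let _ : PreInnerProductSpace.Core ℂ F :=
    { inner f g := S f g
      conj_inner_symm f g := (apply_flip_eq_conj_of_nonneg S hS g f).symm
      re_inner_nonneg f := (Complex.nonneg_iff.mp (hS f)).1
      add_left f g h := by simp
      smul_left f g c := by simp }
  have := InnerProductSpace.Core.inner_mul_inner_self_le (𝕜 := ℂ) f g
  change ‖S f g‖ * ‖S g f‖ ≤ (S f f).re * (S g g).re at this
  rwa [apply_flip_eq_conj_of_nonneg S hS f g, Complex.norm_conj, ← sq] at this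

theorem norm_apply_le_of_nonneg_of_le {E : Type*} [NormedAddCommGroup E] [InnerProductSpace ℂ E]
    (S : F →ₗ⋆[ℂ] F →ₗ[ℂ] ℂ) (L : F →ₗ[ℂ] E) (hS : ∀ f, 0 ≤ S f f)
    (hSL : ∀ f, S f f ≤ ⟪L f, L f⟫_ℂ) (f g : F) : ‖S f g‖ ≤ ‖L f‖ * ‖L g‖ := by
  have hre (f : F) : (S f f).re ≤ ‖L f‖ ^ 2 := by
    rw [← inner_self_eq_norm_sq (𝕜 := ℂ)]
    exact (Complex.le_def.mp (hSL f)).1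
  refine le_of_sq_le_sq ?_ (by positivity)
  calc ‖S f g‖ ^ 2 ≤ (S f f).re * (S g g).re := norm_apply_sq_le_of_nonneg S hS f g
    _ ≤ ‖L f‖ ^ 2 * ‖L g‖ ^ 2 :=
      mul_le_mul (hre f) (hre g) (Complex.nonneg_iff.mp (hS g)).1 (by positivity)
    _ = (‖L f‖ * ‖L g‖) ^ 2 := by ring

end LinearMap

section

variable {𝕜 F E : Type*} [RCLike 𝕜] [AddCommGroup F] [Module 𝕜 F]
  [NormedAddCommGroup E] [InnerProductSpace 𝕜 E] {L : F →ₗ[𝕜] E}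

theorem DenseRange.exists_inner_eq_of_norm_le [CompleteSpace E] (hL : DenseRange L)
    (φ : F →ₗ[𝕜] 𝕜) {C : ℝ} (hC : 0 ≤ C) (hφ : ∀ f, ‖φ f‖ ≤ C * ‖L f‖) :
    ∃ y : E, ‖y‖ ≤ C ∧ ∀ f, ⟪y, L f⟫_𝕜 = φ f := by
  refine ⟨(InnerProductSpace.toDual 𝕜 E).symm (φ.extendOfNorm L), ?_, fun f => ?_⟩
  · rw [LinearIsometryEquiv.norm_map]
    exact LinearMap.opNorm_extendOfNorm_le hL hC hφ
  · rw [InnerProductSpace.toDual_symm_apply, LinearMap.extendOfNorm_eq hL ⟨C, hφ⟩]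

theorem DenseRange.exists_inner_apply_eq_of_norm_le [CompleteSpace E] (hL : DenseRange L)
    (S : F →ₗ⋆[𝕜] F →ₗ[𝕜] 𝕜) {C : ℝ} (hC : 0 ≤ C)
    (hS : ∀ f g, ‖S f g‖ ≤ C * ‖L f‖ * ‖L g‖) :
    ∃ X : E →L[𝕜] E, ∀ f g, ⟪L f, X (L g)⟫_𝕜 = S f g := by
  have hcol (g : F) : ∃ y : E, ‖y‖ ≤ C * ‖L g‖ ∧ ∀ f, ⟪L f, y⟫_𝕜 = S f g := by
    obtain ⟨y, hy, hyS⟩ := hL.exists_inner_eq_of_norm_le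
      ((starLinearEquiv 𝕜).toLinearMap ∘ₛₗ S.flip g) (C := C * ‖L g‖) (by positivity)
      (fun f => by simpa [mul_right_comm] using hS f g)
    exact ⟨y, hy, fun f => by rw [← inner_conj_symm, hyS]; simp⟩
  choose Y hY hYS using hcol
  let Yₗ : F →ₗ[𝕜] E :=
    { toFun := Y
      map_add' g g' := hL.eq_of_inner_right 𝕜 fun f => by simp [inner_add_right, hYS]
      map_smul' c g := hL.eq_of_inner_right 𝕜 fun f => by simp [inner_smul_right, hYS] }
  refine ⟨Yₗ.extendOfNorm L, fun f g => ?_⟩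
  rw [LinearMap.extendOfNorm_eq hL ⟨C, hY⟩]
  exact hYS g f

theorem eq_of_inner_right_of_dense_span {s : Set E} (hs : Dense (Submodule.span 𝕜 s : Set E))
    {x y : E} (h : ∀ u ∈ s, ⟪u, x⟫_𝕜 = ⟪u, y⟫_𝕜) : x = y :=
  hs.eq_of_inner_right 𝕜 fun v hv => by
    induction hv using Submodule.span_induction with
    | mem u hu => exact h u hu
    | zero => simp
    | add u w _ _ hu hw => simp [inner_add_left, hu, hw]
    | smul c u _ hu => simp [inner_smul_left, hu]

theorem ContinuousLinearMap.ext_inner_of_dense_span {s : Set E}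
    (hs : Dense (Submodule.span 𝕜 s : Set E)) {T T' : E →L[𝕜] E}
    (h : ∀ u ∈ s, ∀ v ∈ s, ⟪u, T v⟫_𝕜 = ⟪u, T' v⟫_𝕜) : T = T' :=
  ext_on hs fun v hv => eq_of_inner_right_of_dense_span hs fun u hu => h u hu v hv

end

theorem DenseRange.isPositive_of_inner_nonneg {F E : Type*} [AddCommGroup F] [Module ℂ F]
    [NormedAddCommGroup E] [InnerProductSpace ℂ E] {L : F →ₗ[ℂ] E} (hL : DenseRange L)
    {T : E →L[ℂ] E} (hT : ∀ f, 0 ≤ ⟪L f, T (L f)⟫_ℂ) : T.IsPositive := by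
  refine T.isPositive_iff_complex.mpr fun x => ?_
  have hx : 0 ≤ ⟪T x, x⟫_ℂ := by
    rw [← inner_conj_symm, starRingEnd_apply, star_nonneg_iff]
    exact hL.induction_on x (isClosed_le continuous_const (by fun_prop)) hT
  exact ⟨(Complex.eq_re_of_ofReal_le (r := 0) (by simpa using hx)).symm,
    (Complex.nonneg_iff.mp hx).1⟩

section KernelForm

variable {A H : Type*} [Mul A] [Star A] [NormedAddCommGroup H] [InnerProductSpace ℂ H]

def kernelForm (Θ : A → H →L[ℂ] H) : (A →₀ H) →ₗ⋆[ℂ] (A →₀ H) →ₗ[ℂ] ℂ :=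
  Finsupp.lsum ℂ fun a =>
    (innerₛₗ ℂ).compl₂ (Finsupp.lsum ℂ fun b => (Θ (star a * b)).toLinearMap)

theorem kernelForm_apply (Θ : A → H →L[ℂ] H) (f g : A →₀ H) :
    kernelForm Θ f g = f.sum fun a ξ => g.sum fun b η => ⟪ξ, Θ (star a * b) η⟫_ℂ := by
  simp [kernelForm, Finsupp.inner_sum]

theorem kernelForm_single (Θ : A → H →L[ℂ] H) (a b : A) (ξ η : H) :
    kernelForm Θ (Finsupp.single a ξ) (Finsupp.single b η) = ⟪ξ, Θ (star a * b) η⟫_ℂ := by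
  simp [kernelForm]

theorem kernelForm_sub_apply (Θ Θ' : A → H →L[ℂ] H) (f g : A →₀ H) :
    kernelForm (fun a => Θ a - Θ' a) f g = kernelForm Θ f g - kernelForm Θ' f g := by
  simp [kernelForm_apply, Finsupp.sum_sub]

end KernelForm

namespace IsCompletelyPositiveMap

variable {A : Type u} [NonUnitalNormedRing A] [StarRing A]
  {H : Type u} [NormedAddCommGroup H] [InnerProductSpace ℂ H] {Θ : A → H →L[ℂ] H}

theorem sum_inner_nonneg (hΘ : IsCompletelyPositiveMap Θ) {k : ℕ} (a : Fin k → A)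
    (v : Fin k → H) : 0 ≤ ∑ i, ∑ j, ⟪v i, Θ (star (a i) * a j) (v j)⟫_ℂ := by
  cases k with
  | zero => simp
  | succ k =>
    -- `a` is the only nonzero row of `b`, so `bᴴ * b = [star (a i) * a j]`.
    convert hΘ (k + 1) (Matrix.of (Pi.single 0 a)) v using 5
    rw [Matrix.mul_apply]
    simp [Fin.sum_univ_succ]

theorem finset_sum_inner_nonneg (hΘ : IsCompletelyPositiveMap Θ) {ι : Type*} (s : Finset ι)
    (a : ι → A) (v : ι → H) : 0 ≤ ∑ i ∈ s, ∑ j ∈ s, ⟪v i, Θ (star (a i) * a j) (v j)⟫_ℂ := by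
  let e := s.equivFin.symm
  calc 0 ≤ ∑ i, ∑ j, ⟪v (e i), Θ (star (a (e i)) * a (e j)) (v (e j))⟫_ℂ :=
        hΘ.sum_inner_nonneg _ _
    _ = ∑ i : s, ∑ j : s, ⟪v i, Θ (star (a i) * a j) (v j)⟫_ℂ :=
        Fintype.sum_equiv e _ _ fun i => Fintype.sum_equiv e _ _ fun j => rfl
    _ = _ := by
      rw [← Finset.sum_coe_sort s]
      exact Finset.sum_congr rfl fun i _ =>
        Finset.sum_coe_sort s fun j => ⟪v i, Θ (star (a i) * a j) (v j)⟫_ℂ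

theorem kernelForm_self_nonneg (hΘ : IsCompletelyPositiveMap Θ) (f : A →₀ H) :
    0 ≤ kernelForm Θ f f := by
  rw [kernelForm_apply]
  exact hΘ.finset_sum_inner_nonneg f.support id f

end IsCompletelyPositiveMap

section Stinespring

variable {A : Type*} [Ring A] [StarRing A] [Algebra ℂ A]
  {H : Type*} [NormedAddCommGroup H] [InnerProductSpace ℂ H]
  {K : Type*} [NormedAddCommGroup K] [InnerProductSpace ℂ K] [CompleteSpace K]
  (π : A →⋆ₐ[ℂ] (K →L[ℂ] K)) (V : H →L[ℂ] K)

def stinespringSum : (A →₀ H) →ₗ[ℂ] K := Finsupp.lsum ℂ fun a => ((π a).comp V).toLinearMap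

theorem stinespringSum_apply (f : A →₀ H) :
    stinespringSum π V f = f.sum fun a ξ => π a (V ξ) := rfl

theorem stinespringSum_single (a : A) (ξ : H) :
    stinespringSum π V (Finsupp.single a ξ) = π a (V ξ) := by
  simp [stinespringSum_apply]

theorem StarAlgHom.map_mul_apply (a b : A) (x : K) : π (a * b) x = π a (π b x) := by
  rw [map_mul, mul_apply_eq_comp]

theorem StarAlgHom.inner_map_apply_right (a : A) (x y : K) :
    ⟪x, π a y⟫_ℂ = ⟪π (star a) x, y⟫_ℂ := by
  rw [map_star, star_eq_adjoint, adjoint_inner_left]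

variable {π V}

theorem denseRange_stinespringSum
    (hmin : Dense (Submodule.span ℂ {x : K | ∃ (a : A) (ξ : H), x = π a (V ξ)} : Set K)) :
    DenseRange (stinespringSum π V) := by
  refine hmin.mono ?_
  rw [← LinearMap.coe_range, SetLike.coe_subset_coe, Submodule.span_le]
  rintro _ ⟨a, ξ, rfl⟩
  exact ⟨Finsupp.single a ξ, stinespringSum_single π V a ξ⟩

variable {Ψ : A → H →L[ℂ] H} {X : K →L[ℂ] K}

theorem commute_of_inner_eq
    (hmin : Dense (Submodule.span ℂ {x : K | ∃ (a : A) (ξ : H), x = π a (V ξ)} : Set K))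
    (hX : ∀ a b ξ η, ⟪π a (V ξ), X (π b (V η))⟫_ℂ = ⟪ξ, Ψ (star a * b) η⟫_ℂ) (c : A) :
    X ∘L π c = π c ∘L X := by
  refine ContinuousLinearMap.ext_inner_of_dense_span hmin ?_
  rintro _ ⟨a, ξ, rfl⟩ _ ⟨b, η, rfl⟩
  rw [comp_apply, comp_apply, ← π.map_mul_apply, hX, π.inner_map_apply_right,
    ← π.map_mul_apply, hX, star_mul, star_star, mul_assoc]

variable [CompleteSpace H]

theorem inner_stinespringSum (f g : A →₀ H) :
    ⟪stinespringSum π V f, stinespringSum π V g⟫_ℂ =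
      kernelForm (fun a => adjoint V ∘L (π a ∘L V)) f g := by
  simp only [stinespringSum_apply, kernelForm_apply, Finsupp.sum_inner]
  simp only [Finsupp.inner_sum]
  refine Finsupp.sum_congr fun a _ => Finsupp.sum_congr fun b _ => ?_
  rw [comp_apply, comp_apply, adjoint_inner_right, π.map_mul_apply,
    π.inner_map_apply_right (star a), star_star]

theorem adjoint_comp_eq_of_inner_eq
    (hX : ∀ a b ξ η, ⟪π a (V ξ), X (π b (V η))⟫_ℂ = ⟪ξ, Ψ (star a * b) η⟫_ℂ) (a : A) :
    Ψ a = adjoint V ∘L (X ∘L (π a ∘L V)) :=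
  ext fun η => ext_inner_left ℂ fun ξ => by
    simpa [adjoint_inner_right] using (hX 1 a ξ η).symm

theorem inner_eq_of_commute (hcomm : ∀ a, X ∘L π a = π a ∘L X)
    (hrep : ∀ a, Ψ a = adjoint V ∘L (X ∘L (π a ∘L V))) (a b : A) (ξ η : H) :
    ⟪π a (V ξ), X (π b (V η))⟫_ℂ = ⟪ξ, Ψ (star a * b) η⟫_ℂ := by
  calc ⟪π a (V ξ), X (π b (V η))⟫_ℂ = ⟪V ξ, π (star a) (X (π b (V η)))⟫_ℂ := by
        rw [π.inner_map_apply_right, star_star]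
    _ = ⟪V ξ, X (π (star a * b) (V η))⟫_ℂ := by
        rw [π.map_mul_apply, ← comp_apply (π (star a)) X, ← hcomm, comp_apply]
    _ = ⟪ξ, Ψ (star a * b) η⟫_ℂ := by
        rw [hrep, comp_apply, comp_apply, comp_apply, adjoint_inner_right]

end Stinespring

theorem stinespring_radon_nikodym_general
    {A : Type u} [NormedRing A] [StarRing A] [NormedAlgebra ℂ A]
    {H : Type u} [NormedAddCommGroup H] [InnerProductSpace ℂ H] [CompleteSpace H]
    {K : Type u} [NormedAddCommGroup K] [InnerProductSpace ℂ K] [CompleteSpace K]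
    (π : A →⋆ₐ[ℂ] (K →L[ℂ] K))
    (V : H →L[ℂ] K)
    (hmin : Dense ((Submodule.span ℂ {x : K | ∃ (a : A) (ξ : H), x = π a (V ξ)} :
      Submodule ℂ K) : Set K))
    (Φ Ψ : A →ₗ[ℂ] (H →L[ℂ] H))
    (hΦ : ∀ a : A, Φ a = adjoint V ∘L (π a ∘L V))
    (hΨcp : IsCompletelyPositiveMap (fun a : A => Ψ a))
    (hdiff : IsCompletelyPositiveMap (fun a : A => Φ a - Ψ a)) :
    ∃ X : K →L[ℂ] K,
      (∀ a : A, X ∘L π a = π a ∘L X) ∧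
      (∀ a : A, Ψ a = adjoint V ∘L (X ∘L (π a ∘L V))) ∧
      X.IsPositive ∧ ((1 : K →L[ℂ] K) - X).IsPositive ∧
      (∀ X' : K →L[ℂ] K, (∀ a : A, X' ∘L π a = π a ∘L X') →
        (∀ a : A, Ψ a = adjoint V ∘L (X' ∘L (π a ∘L V))) → X' = X) := by
  set L := stinespringSum π V
  have hL : DenseRange L := denseRange_stinespringSum hmin
  have hΦL (f g : A →₀ H) : kernelForm (fun a => Φ a) f g = ⟪L f, L g⟫_ℂ := by
    simp only [hΦ, L, inner_stinespringSum]
  have hgap (f : A →₀ H) : 0 ≤ ⟪L f, L f⟫_ℂ - kernelForm (fun a => Ψ a) f f := by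
    rw [← hΦL, ← kernelForm_sub_apply]
    exact hdiff.kernelForm_self_nonneg f
  obtain ⟨X, hX⟩ := hL.exists_inner_apply_eq_of_norm_le (kernelForm fun a => Ψ a) zero_le_one
    fun f g => by
      simpa using (kernelForm fun a => Ψ a).norm_apply_le_of_nonneg_of_le L
        hΨcp.kernelForm_self_nonneg (fun f => sub_nonneg.mp (hgap f)) f g
  have hXgen (a b : A) (ξ η : H) :
      ⟪π a (V ξ), X (π b (V η))⟫_ℂ = ⟪ξ, Ψ (star a * b) η⟫_ℂ := by
    simpa [L, stinespringSum_single, kernelForm_single] using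
      hX (Finsupp.single a ξ) (Finsupp.single b η)
  refine ⟨X, commute_of_inner_eq hmin hXgen, adjoint_comp_eq_of_inner_eq hXgen,
    hL.isPositive_of_inner_nonneg fun f => ?_, hL.isPositive_of_inner_nonneg fun f => ?_,
    fun X' hcomm hrep => ContinuousLinearMap.ext_inner_of_dense_span hmin ?_⟩
  · rw [hX]
    exact hΨcp.kernelForm_self_nonneg f
  · simpa [inner_sub_right, hX] using hgap f
  · rintro _ ⟨a, ξ, rfl⟩ _ ⟨b, η, rfl⟩
    rw [inner_eq_of_commute hcomm hrep, hXgen]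

/-- If `Φ = V* π(·) V` is the minimal Stinespring representation of the
completely positive map `Φ` and `Φ - Ψ` is completely positive, then there is a unique
`X` in the commutant of `π(A)` with `Ψ(a) = V* X π(a) V`, and `0 ≤ X ≤ I`. -/
theorem stinespring_radon_nikodym
    {A : Type u} [NormedRing A] [StarRing A] [CStarRing A] [NormedAlgebra ℂ A]
    [StarModule ℂ A] [CompleteSpace A]
    {H : Type u} [NormedAddCommGroup H] [InnerProductSpace ℂ H] [CompleteSpace H]
    {K : Type u} [NormedAddCommGroup K] [InnerProductSpace ℂ K] [CompleteSpace K]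
    (π : A →⋆ₐ[ℂ] (K →L[ℂ] K))
    (V : H →L[ℂ] K) (hViso : ∀ ξ : H, ‖V ξ‖ = ‖ξ‖)
    (hmin : Dense ((Submodule.span ℂ {x : K | ∃ (a : A) (ξ : H), x = π a (V ξ)} :
      Submodule ℂ K) : Set K))
    (Φ Ψ : A →ₗ[ℂ] (H →L[ℂ] H))
    (hΦ : ∀ a : A, Φ a = adjoint V ∘L (π a ∘L V))
    (hΦcp : IsCompletelyPositiveMap (fun a : A => Φ a))
    (hΨcp : IsCompletelyPositiveMap (fun a : A => Ψ a))
    (hdiff : IsCompletelyPositiveMap (fun a : A => Φ a - Ψ a)) :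
    ∃ X : K →L[ℂ] K,
      (∀ a : A, X ∘L π a = π a ∘L X) ∧
      (∀ a : A, Ψ a = adjoint V ∘L (X ∘L (π a ∘L V))) ∧
      X.IsPositive ∧ ((1 : K →L[ℂ] K) - X).IsPositive ∧
      (∀ X' : K →L[ℂ] K, (∀ a : A, X' ∘L π a = π a ∘L X') →
        (∀ a : A, Ψ a = adjoint V ∘L (X' ∘L (π a ∘L V))) → X' = X) :=
  stinespring_radon_nikodym_general π V hmin Φ Ψ hΦ hΨcp hdiff
end
end
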